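/- arXiv:1202.6557 — 10 statements merged into one kernel-verified Lean document; each statement's English description precedes it below -/
import Mathlib

section
/- Let α, β > 0, r = √(α/β), and d ≥ 1. Let F be a nonnegative finite Borel measure on ℝ^d with ∫ |v|² dF(v) < ∞. Then F satisfies div_v{F (α − β|v|²)v} = 0 in the distributional sense, i.e. ∫_{ℝ^d} (α − β|v|²)(v · ∇φ(v)) dF(v) = 0 for every continuously differentiable compactly supported φ : ℝ^d → ℝ, if and only if the support of F is contained in {0} ∪ {v ∈ ℝ^d : |v| = r}. -/
open MeasureTheory Real Set
open scoped RealInnerProductSpace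

/-!
Testing against a radial function `φ v = ψ (‖v‖²)` gives `⟪v, ∇φ v⟫ = 2 ‖v‖² ψ' (‖v‖²)`, so the
equation becomes `∫ 2 g(‖v‖²) ψ'(‖v‖²) dF = 0` with `g t = t (α - β t)`. Choosing
`ψ' t = g t · (n - t)⁺` makes the integrand `2 g(‖v‖²)² (n - ‖v‖²)⁺` nonnegative, so it vanishes
`F`-a.e.; letting `n → ∞`, `F` is concentrated on the zero set `{0} ∪ {‖v‖ = r}` of `g (‖v‖²)`.
Conversely, on that set `(α - β‖v‖²) v = 0`, so the integrand vanishes for every `φ`.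
-/

section Radial

variable {E : Type*} [NormedAddCommGroup E] [InnerProductSpace ℝ E]

section Gradient

variable [CompleteSpace E]

theorem inner_gradient_comp_norm_sq {ψ : ℝ → ℝ} {c : ℝ} (v : E)
    (hψ : HasDerivAt ψ c (‖v‖ ^ 2)) :
    ⟪v, gradient (fun w => ψ (‖w‖ ^ 2)) v⟫ = 2 * ‖v‖ ^ 2 * c := by
  have hφ : HasGradientAt (fun w : E => ψ (‖w‖ ^ 2)) ((2 * c) • v) v := by
    refine (hψ.comp_hasFDerivAt v (hasStrictFDerivAt_norm_sq v).hasFDerivAt).congr_fderiv ?_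
    ext w
    simp
    ring
  rw [hφ.gradient, inner_smul_right, real_inner_self_eq_norm_sq]
  ring

theorem exists_radial_testFunction [ProperSpace E] {h : ℝ → ℝ} (hh : Continuous h) {a : ℝ}
    (ha : ∀ t, a ≤ t → h t = 0) :
    ∃ φ : E → ℝ, ContDiff ℝ 1 φ ∧ HasCompactSupport φ ∧
      ∀ v, ⟪v, gradient φ v⟫ = 2 * ‖v‖ ^ 2 * h (‖v‖ ^ 2) := by
  set ψ : ℝ → ℝ := fun t => ∫ s in a..t, h s
  have hψ' : ∀ t, HasDerivAt ψ (h t) t := fun t =>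
    (hh.integral_hasStrictDerivAt a t).hasDerivAt
  have hψ : ContDiff ℝ 1 ψ := by
    rw [contDiff_one_iff_deriv]
    have hderiv : deriv ψ = h := funext fun t => (hψ' t).deriv
    exact ⟨fun t => (hψ' t).differentiableAt, hderiv ▸ hh⟩
  have hψa : ∀ t, a ≤ t → ψ t = 0 := fun t ht => by
    rw [← intervalIntegral.integral_zero (a := a) (b := t)]
    refine intervalIntegral.integral_congr fun s hs => ?_
    rw [uIcc_of_le ht] at hs
    exact ha s hs.1
  refine ⟨fun w => ψ (‖w‖ ^ 2), hψ.comp (contDiff_norm_sq ℝ), ?_,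
    fun v => inner_gradient_comp_norm_sq v (hψ' _)⟩
  refine HasCompactSupport.intro (isCompact_closedBall (0 : E) √a) fun v hv => hψa _ ?_
  rw [Metric.mem_closedBall, dist_zero_right, not_le] at hv
  exact (lt_sq_of_sqrt_lt hv).le

end Gradient

variable [MeasurableSpace E] {μ : Measure E} {c : ℝ → ℝ}

theorem integral_mul_inner_eq_zero_of_ae_norm_sq_mul_eq_zero
    (h : ∀ᵐ v ∂μ, ‖v‖ ^ 2 * c (‖v‖ ^ 2) = 0) (w : E → E) :
    ∫ v, c (‖v‖ ^ 2) * ⟪v, w v⟫ ∂μ = 0 := by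
  refine integral_eq_zero_of_ae ?_
  filter_upwards [h] with v hv
  rcases mul_eq_zero.1 hv with hv | hv
  · simp [norm_eq_zero.1 (pow_eq_zero_iff two_ne_zero |>.1 hv)]
  · simp [hv]

variable [CompleteSpace E] [ProperSpace E] [BorelSpace E] [IsFiniteMeasureOnCompacts μ]

theorem ae_norm_sq_mul_eq_zero_of_forall_integral_eq_zero (hc : Continuous c)
    (htest : ∀ φ : E → ℝ, ContDiff ℝ 1 φ → HasCompactSupport φ →
      ∫ v, c (‖v‖ ^ 2) * ⟪v, gradient φ v⟫ ∂μ = 0) :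
    ∀ᵐ v ∂μ, ‖v‖ ^ 2 * c (‖v‖ ^ 2) = 0 := by
  set g : ℝ → ℝ := fun t => t * c t
  set f : ℕ → E → ℝ := fun n v => g (‖v‖ ^ 2) ^ 2 * max ((n : ℝ) - ‖v‖ ^ 2) 0
  have hf : ∀ n, ∀ᵐ v ∂μ, f n v = 0 := by
    intro n
    have hcut : Continuous fun t : ℝ => g t * max ((n : ℝ) - t) 0 := by fun_prop
    obtain ⟨φ, hφ, hφc, hφv⟩ := exists_radial_testFunction (E := E) hcut
      (a := n) fun t ht => by simp [max_eq_right (sub_nonpos.2 ht)]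
    have hint : ∫ v, 2 * f n v ∂μ = 0 := by
      rw [← htest φ hφ hφc]
      congr 1 with v
      rw [hφv]
      ring
    have hfc : Continuous (f n) := by fun_prop
    have hfs : HasCompactSupport (f n) := by
      refine HasCompactSupport.intro (isCompact_closedBall (0 : E) √n) fun v hv => ?_
      rw [Metric.mem_closedBall, dist_zero_right, not_le] at hv
      simp [f, max_eq_right (sub_nonpos.2 (lt_sq_of_sqrt_lt hv).le)]
    rw [integral_const_mul, mul_eq_zero, or_iff_right two_ne_zero,
      integral_eq_zero_iff_of_nonneg (fun v => by positivity)
        (hfc.integrable_of_hasCompactSupport hfs)] at hint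
    exact hint
  filter_upwards [ae_all_iff.2 hf] with v hv
  obtain ⟨n, hn⟩ := exists_nat_gt (‖v‖ ^ 2)
  simpa [f, g, (sub_pos.2 hn).ne', hn.not_ge] using hv n

theorem forall_integral_mul_inner_gradient_eq_zero_iff (hc : Continuous c) :
    (∀ φ : E → ℝ, ContDiff ℝ 1 φ → HasCompactSupport φ →
      ∫ v, c (‖v‖ ^ 2) * ⟪v, gradient φ v⟫ ∂μ = 0) ↔
      ∀ᵐ v ∂μ, ‖v‖ ^ 2 * c (‖v‖ ^ 2) = 0 :=
  ⟨ae_norm_sq_mul_eq_zero_of_forall_integral_eq_zero hc,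
    fun h _ _ _ => integral_mul_inner_eq_zero_of_ae_norm_sq_mul_eq_zero h _⟩

end Radial

theorem stmt0_general (d : ℕ) (α β : ℝ) (hα : 0 < α) (hβ : 0 < β)
    (r : ℝ) (hr : r = Real.sqrt (α / β))
    (F : Measure (EuclideanSpace ℝ (Fin d))) [IsFiniteMeasure F] :
    (∀ φ : EuclideanSpace ℝ (Fin d) → ℝ, ContDiff ℝ 1 φ → HasCompactSupport φ →
        ∫ v, (α - β * ‖v‖ ^ 2) * ⟪v, gradient φ v⟫ ∂F = 0) ↔
      F (({0} ∪ {v : EuclideanSpace ℝ (Fin d) | ‖v‖ = r})ᶜ) = 0 := by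
  have hzero : ∀ v : EuclideanSpace ℝ (Fin d),
      ‖v‖ ^ 2 * (α - β * ‖v‖ ^ 2) = 0 ↔ v ∈ ({0} ∪ {v | ‖v‖ = r}) := by
    intro v
    rw [hr, mem_union, mem_singleton_iff, mem_ofPred_eq, eq_comm (a := ‖v‖),
      sqrt_eq_iff_eq_sq (by positivity) (norm_nonneg v), div_eq_iff hβ.ne', mul_eq_zero,
      pow_eq_zero_iff two_ne_zero, norm_eq_zero, sub_eq_zero, mul_comm β]
  rw [forall_integral_mul_inner_gradient_eq_zero_iff (c := fun t => α - β * t) (by fun_prop),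
    ae_iff]
  simp only [hzero]
  rfl

/-- Let `α, β > 0`, `r = √(α/β)`, `d ≥ 1`, and let `F` be a
nonnegative finite Borel measure on `ℝ^d` with finite second moment. Then `F`
satisfies `div_v{F (α − β|v|²)v} = 0` in the distributional sense (i.e.
`∫ (α − β|v|²)(v · ∇φ(v)) dF(v) = 0` for every `φ ∈ C¹_c`) if and only if the
support of `F` is contained in `{0} ∪ {|v| = r}` (equivalently, the complement
of this closed set is `F`-null). -/
theorem stmt0 (d : ℕ) (hd : 1 ≤ d) (α β : ℝ) (hα : 0 < α) (hβ : 0 < β)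
    (r : ℝ) (hr : r = Real.sqrt (α / β))
    (F : Measure (EuclideanSpace ℝ (Fin d))) [IsFiniteMeasure F]
    (hmom : Integrable (fun v => ‖v‖ ^ 2) F) :
    (∀ φ : EuclideanSpace ℝ (Fin d) → ℝ, ContDiff ℝ 1 φ → HasCompactSupport φ →
        ∫ v, (α - β * ‖v‖ ^ 2) * ⟪v, gradient φ v⟫ ∂F = 0) ↔
      F (({0} ∪ {v : EuclideanSpace ℝ (Fin d) | ‖v‖ = r})ᶜ) = 0 :=
  stmt0_general d α β hα hβ r hr F
end

section
/- Fix α, β > 0 and set r = √(α/β). Let A < 0, and for 0 < ε < 2αr/(|A|·3√3) let ρ₁^ε < ρ₂^ε denote the two zeros on [0, ∞) of λ^ε(ρ) = εA + (α − βρ²)ρ. Then lim_{ε→0} ρ₁^ε/ε = |A|/α and lim_{ε→0} (r − ρ₂^ε)/ε = |A|/(2α). -/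
open Real Set Filter Topology

/-!
Both roots are governed by an identity `u ε * D (u ε) = ε * |A|` in which `D` is continuous and
bounded away from `0`: for the small root `u = ρ₁` and `D x = α - β x²`, and, since `β r² = α`
factors `α - β ρ²` as `β (r - ρ)(r + ρ)`, for the large root `u = r - ρ₂` and
`D x = β (2r - x)(r - x)`. The lower bound on `D` gives `u ε = O(ε)`, so `u ε → 0`, and then
`u ε / ε = |A| / D (u ε) → |A| / D 0`.
-/

theorem tendsto_div_nhdsGT_zero_of_mul_eq {D u : ℝ → ℝ} {c m : ℝ} (hD : ContinuousAt D 0)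
    (hm : 0 < m) (hu : ∀ᶠ ε in 𝓝[>] 0, m ≤ D (u ε) ∧ u ε * D (u ε) = ε * c) :
    Tendsto (fun ε => u ε / ε) (𝓝[>] 0) (𝓝 (c / D 0)) := by
  have hu_le : ∀ᶠ ε in 𝓝[>] 0, ‖u ε‖ ≤ ε * (|c| / m) := by
    filter_upwards [hu, self_mem_nhdsWithin] with ε ⟨hmD, hεc⟩ (hε : 0 < ε)
    rw [Real.norm_eq_abs, mul_div_assoc', le_div_iff₀ hm]
    calc |u ε| * m ≤ |u ε| * |D (u ε)| := by
          gcongr; exact hmD.trans (le_abs_self _)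
      _ = ε * |c| := by rw [← abs_mul, hεc, abs_mul, abs_of_pos hε]
  have hε_lim : Tendsto (fun ε : ℝ => ε * (|c| / m)) (𝓝[>] 0) (𝓝 0) := by
    have hid : Tendsto (fun ε : ℝ => ε) (𝓝[>] 0) (𝓝 0) :=
      tendsto_nhdsWithin_of_tendsto_nhds tendsto_id
    simpa using hid.mul_const (|c| / m)
  have hu_lim : Tendsto u (𝓝[>] 0) (𝓝 0) := squeeze_zero_norm' hu_le hε_lim
  have hDu_lim : Tendsto (fun ε => D (u ε)) (𝓝[>] 0) (𝓝 (D 0)) := hD.tendsto.comp hu_lim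
  have hD0 : m ≤ D 0 := ge_of_tendsto hDu_lim (hu.mono fun _ h => h.1)
  refine (tendsto_const_nhds.div hDu_lim (hm.trans_le hD0).ne').congr' ?_
  filter_upwards [hu, self_mem_nhdsWithin] with ε ⟨hmD, hεc⟩ (hε : 0 < ε)
  rw [Pi.div_apply, div_eq_div_iff (hm.trans_le hmD).ne' hε.ne', mul_comm c, hεc]

theorem two_mul_div_three_le_sub_mul_sq {α β r ρ : ℝ} (hβ : 0 ≤ β) (hαr : β * r ^ 2 = α)
    (hρ : 0 ≤ ρ) (hρr : ρ < r / √3) : 2 * α / 3 ≤ α - β * ρ ^ 2 := by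
  have hs : (0 : ℝ) < √3 := by positivity
  have hρs : ρ * √3 < r := (lt_div_iff₀ hs).mp hρr
  have h3ρ : 3 * ρ ^ 2 ≤ r ^ 2 := by
    nlinarith [mul_self_le_mul_self (by positivity) hρs.le,
      Real.sq_sqrt (show (0 : ℝ) ≤ 3 by norm_num)]
  nlinarith [mul_le_mul_of_nonneg_left h3ρ hβ]

theorem div_sqrt_three_le_mul_add_mul {α β r ρ : ℝ} (hβ : 0 ≤ β) (hr : 0 ≤ r)
    (hαr : β * r ^ 2 = α) (hρr : r / √3 < ρ) : α / √3 ≤ β * (r + ρ) * ρ := by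
  have hρ : 0 ≤ ρ := (by positivity : 0 ≤ r / √3).trans hρr.le
  calc α / √3 = β * r * (r / √3) := by rw [← hαr]; ring
    _ ≤ β * r * ρ := by gcongr
    _ ≤ β * (r + ρ) * ρ := by gcongr; linarith

/-- Fix `α, β > 0`, `r = √(α/β)`, `A < 0`. If for each
`0 < ε < 2αr/(|A|·3√3)`, `ρ₁ ε < ρ₂ ε` are the two zeros on `[0,∞)` of
`λ^ε(ρ) = εA + (α − βρ²)ρ` (with `0 < ρ₁ ε < r/√3 < ρ₂ ε < r`), then
`ρ₁^ε/ε → |A|/α` and `(r − ρ₂^ε)/ε → |A|/(2α)` as `ε → 0⁺`. -/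
theorem stmt4 (α β A : ℝ) (hα : 0 < α) (hβ : 0 < β) (hA : A < 0)
    (r : ℝ) (hr : r = Real.sqrt (α / β))
    (ρ₁ ρ₂ : ℝ → ℝ)
    (hzeros : ∀ ε, 0 < ε → ε < 2 * α * r / (|A| * (3 * Real.sqrt 3)) →
      0 < ρ₁ ε ∧ ρ₁ ε < r / Real.sqrt 3 ∧
      r / Real.sqrt 3 < ρ₂ ε ∧ ρ₂ ε < r ∧
      ε * A + (α - β * (ρ₁ ε) ^ 2) * ρ₁ ε = 0 ∧
      ε * A + (α - β * (ρ₂ ε) ^ 2) * ρ₂ ε = 0) :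
    Tendsto (fun ε => ρ₁ ε / ε) (𝓝[>] 0) (𝓝 (|A| / α)) ∧
    Tendsto (fun ε => (r - ρ₂ ε) / ε) (𝓝[>] 0) (𝓝 (|A| / (2 * α))) := by
  have hr0 : 0 < r := hr ▸ Real.sqrt_pos.mpr (by positivity)
  have hαr : β * r ^ 2 = α := by rw [hr, Real.sq_sqrt (by positivity)]; field_simp
  have hA0 : 0 < |A| := abs_pos.mpr hA.ne
  have hAabs : |A| = -A := abs_of_neg hA
  have hroots : ∀ᶠ ε in 𝓝[>] (0 : ℝ), 0 < ρ₁ ε ∧ ρ₁ ε < r / √3 ∧ r / √3 < ρ₂ ε ∧ ρ₂ ε < r ∧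
      ε * A + (α - β * ρ₁ ε ^ 2) * ρ₁ ε = 0 ∧ ε * A + (α - β * ρ₂ ε ^ 2) * ρ₂ ε = 0 := by
    filter_upwards [Ioo_mem_nhdsGT (show (0 : ℝ) < 2 * α * r / (|A| * (3 * √3)) by positivity)]
      with ε hε using hzeros ε hε.1 hε.2
  constructor
  · convert tendsto_div_nhdsGT_zero_of_mul_eq (D := fun x => α - β * x ^ 2) (c := |A|)
      (m := 2 * α / 3)
      (by fun_prop) (by positivity) ?_ using 3
    · simp
    filter_upwards [hroots] with ε ⟨h0, hlt, _, _, heq, _⟩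
    exact ⟨two_mul_div_three_le_sub_mul_sq hβ.le hαr h0.le hlt,
      by linear_combination heq - ε * hAabs⟩
  · convert tendsto_div_nhdsGT_zero_of_mul_eq (D := fun x => β * (2 * r - x) * (r - x))
      (c := |A|) (m := α / √3) (by fun_prop) (by positivity) ?_ using 3
    · rw [← hαr]; ring
    filter_upwards [hroots] with ε ⟨_, _, hgt, _, _, heq⟩
    have hD : β * (2 * r - (r - ρ₂ ε)) * (r - (r - ρ₂ ε)) = β * (r + ρ₂ ε) * ρ₂ ε := by ring
    rw [hD]
    exact ⟨div_sqrt_three_le_mul_add_mul hβ.le hr0.le hαr hgt,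
      by linear_combination heq + ρ₂ ε * hαr - ε * hAabs⟩
end

section
/- Fix α, β > 0 and set r = √(α/β). Let ε > 0, A ≥ 0, and let V : [0, ∞) → ℝ^d be an (ε, A)-characteristic velocity. Then for every t ≥ 0, |V(t)| ≤ max{|V(0)|, ρ₃^ε(A)}. -/
open Real Set
open scoped RealInnerProductSpace

/-!
Compare `‖V‖` with any level `ρ > max ‖V 0‖ ρ₃`. Where `‖V‖ = ρ`, the characteristic inequality gives
`⟪V, V'⟫ ≤ (ρ / ε) (ε A + (α - β ρ²) ρ)`, and this is negative because the cubic
`ρ ↦ (α - β ρ²) ρ` is strictly decreasing on `[r, ∞)` and `ρ > ρ₃ ≥ r`. So `‖V‖²` is strictly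
decreasing whenever it touches `ρ²`, and a fencing argument keeps `‖V‖ ≤ ρ` forever.
-/

theorem strictAntiOn_cubic {α β : ℝ} (hβ : 0 < β) :
    StrictAntiOn (fun ρ : ℝ => (α - β * ρ ^ 2) * ρ) (Ici √(α / β)) := by
  intro x hx y hy hxy
  obtain ⟨hx₀, hαx⟩ := sqrt_le_iff.1 (mem_Ici.1 hx)
  have hαβ : α ≤ β * x ^ 2 := by rwa [div_le_iff₀' hβ] at hαx
  have hy₀ : 0 < y := hx₀.trans_lt hxy
  nlinarith [mul_nonneg hβ.le (mul_nonneg hx₀ hy₀.le), mul_pos hβ (mul_pos hy₀ hy₀)]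

theorem real_inner_le_of_norm_sub_smul_le {E : Type*} [NormedAddCommGroup E]
    [InnerProductSpace ℝ E] {v w : E} {c A : ℝ} (h : ‖w - c • v‖ ≤ A) :
    ⟪v, w⟫ ≤ ‖v‖ * A + c * ‖v‖ ^ 2 := by
  have hsplit : ⟪v, w⟫ = ⟪v, w - c • v⟫ + c * ‖v‖ ^ 2 := by
    rw [inner_sub_right, real_inner_smul_right, real_inner_self_eq_norm_sq]
    ring
  have hbound : ⟪v, w - c • v⟫ ≤ ‖v‖ * A :=
    (real_inner_le_norm _ _).trans (mul_le_mul_of_nonneg_left h (norm_nonneg _))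
  linarith

theorem norm_le_of_inner_deriv_neg_on_sphere {E : Type*} [NormedAddCommGroup E]
    [InnerProductSpace ℝ E] {V V' : ℝ → E} {a b ρ : ℝ} (hV : ContinuousOn V (Icc a b))
    (hderiv : ∀ x ∈ Ico a b, HasDerivWithinAt V (V' x) (Ici x) x) (ha : ‖V a‖ ≤ ρ)
    (hsphere : ∀ x ∈ Ico a b, ‖V x‖ = ρ → ⟪V x, V' x⟫ < 0) :
    ∀ x ∈ Icc a b, ‖V x‖ ≤ ρ := by
  have hρ : 0 ≤ ρ := (norm_nonneg _).trans ha
  intro x hx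
  refine (pow_le_pow_iff_left₀ (norm_nonneg _) hρ two_ne_zero).1 ?_
  refine image_le_of_deriv_right_lt_deriv_boundary (f := fun s => ‖V s‖ ^ 2)
    (B := fun _ => ρ ^ 2) (B' := fun _ => 0) (hV.norm.pow 2)
    (fun s hs => (hderiv s hs).norm_sq) (pow_le_pow_left₀ (norm_nonneg _) ha 2)
    (fun _ => hasDerivAt_const _ _) (fun s hs hsq => ?_) hx
  have := hsphere s hs ((sq_eq_sq₀ (norm_nonneg _) hρ).1 hsq)
  linarith

theorem stmt7_general (d : ℕ) (α β ε A : ℝ) (hβ : 0 < β) (hε : 0 < ε)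
    (r : ℝ) (hr : r = Real.sqrt (α / β))
    (V V' : ℝ → EuclideanSpace ℝ (Fin d))
    (hVderiv : ∀ t ∈ Set.Ici (0:ℝ), HasDerivWithinAt V (V' t) (Set.Ici 0) t)
    (hchar : ∀ t ∈ Set.Ici (0:ℝ),
      ‖V' t - ((1 / ε) * (α - β * ‖V t‖ ^ 2)) • V t‖ ≤ A)
    (ρ₃ : ℝ) (hρ₃r : r ≤ ρ₃) (hρ₃ : ε * A + (α - β * ρ₃ ^ 2) * ρ₃ = 0) :
    ∀ t ∈ Set.Ici (0:ℝ), ‖V t‖ ≤ max ‖V 0‖ ρ₃ := by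
  intro t ht
  refine le_of_forall_gt_imp_ge_of_dense fun ρ hρ => ?_
  obtain ⟨hV0ρ, hρ₃ρ⟩ := max_lt_iff.1 hρ
  have hρ₃_mem : ρ₃ ∈ Ici √(α / β) := hr ▸ hρ₃r
  have hρ_pos : 0 < ρ := (sqrt_le_iff.1 hρ₃_mem).1.trans_lt hρ₃ρ
  have hcubic : ε * A + (α - β * ρ ^ 2) * ρ < 0 := by
    have := strictAntiOn_cubic hβ hρ₃_mem (mem_Ici.2 (hρ₃_mem.out.trans hρ₃ρ.le)) hρ₃ρ
    linarith
  refine norm_le_of_inner_deriv_neg_on_sphere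
    (fun s hs => (hVderiv s hs.1).continuousWithinAt.mono fun _ hu => hu.1)
    (fun s hs => (hVderiv s hs.1).mono (Ici_subset_Ici.2 hs.1)) hV0ρ.le
    (fun s hs hsρ => ?_) t ⟨ht, le_rfl⟩
  calc ⟪V s, V' s⟫ ≤ ρ * A + (1 / ε) * (α - β * ρ ^ 2) * ρ ^ 2 := by
        simpa only [hsρ] using real_inner_le_of_norm_sub_smul_le (hchar s hs.1)
    _ = ρ / ε * (ε * A + (α - β * ρ ^ 2) * ρ) := by field_simp
    _ < 0 := mul_neg_of_pos_of_neg (div_pos hρ_pos hε) hcubic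

/-- Fix `α, β > 0`, `r = √(α/β)`, `ε > 0`, `A ≥ 0`. If
`V : [0,∞) → ℝ^d` is a C¹ curve with `|V′(t) − (1/ε)(α − β|V(t)|²)V(t)| ≤ A`
for all `t ≥ 0` (an `(ε,A)`-characteristic velocity), and `ρ₃` is the zero in
`[r,∞)` of `ρ ↦ εA + (α − βρ²)ρ`, then `|V(t)| ≤ max{|V(0)|, ρ₃}` for all `t ≥ 0`. -/
theorem stmt7 (d : ℕ) (α β ε A : ℝ) (hα : 0 < α) (hβ : 0 < β) (hε : 0 < ε)
    (hA : 0 ≤ A) (r : ℝ) (hr : r = Real.sqrt (α / β))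
    (V V' : ℝ → EuclideanSpace ℝ (Fin d))
    (hV'cont : ContinuousOn V' (Set.Ici 0))
    (hVderiv : ∀ t ∈ Set.Ici (0:ℝ), HasDerivWithinAt V (V' t) (Set.Ici 0) t)
    (hchar : ∀ t ∈ Set.Ici (0:ℝ),
      ‖V' t - ((1 / ε) * (α - β * ‖V t‖ ^ 2)) • V t‖ ≤ A)
    (ρ₃ : ℝ) (hρ₃r : r ≤ ρ₃) (hρ₃ : ε * A + (α - β * ρ₃ ^ 2) * ρ₃ = 0) :
    ∀ t ∈ Set.Ici (0:ℝ), ‖V t‖ ≤ max ‖V 0‖ ρ₃ :=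
  stmt7_general d α β ε A hβ hε r hr V V' hVderiv hchar ρ₃ hρ₃r hρ₃
end

section
/- Fix α, β > 0 and set r = √(α/β). Let A ≥ 0 and ε > 0 with εA < 2αr/(3√3). Let V : [0, ∞) → ℝ^d be an (ε, A)-characteristic velocity with ρ₂^ε(−A) ≤ |V(0)| ≤ ρ₃^ε(A). Then for every t ≥ 0, ρ₂^ε(−A) ≤ |V(t)| ≤ ρ₃^ε(A). -/
/-!
Along a characteristic, `d/dt ‖V‖² = 2⟪V, V'⟫` and `ε⟪V, V'⟫` differs from `ρ g(ρ)`, where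
`ρ = ‖V‖` and `g(ρ) = (α - βρ²)ρ`, by at most `εAρ`. The cubic `g` is strictly decreasing on
`[r/√3, ∞)`, so just above `ρ₃` we have `g(ρ) < g(ρ₃) = -εA` and `‖V‖²` decreases, while just
below `ρ₂` (which lies strictly above `r/√3` because `εA` is below the maximum `2αr/(3√3)` of
`g`) we have `g(ρ) > g(ρ₂) = εA` and `‖V‖²` increases. A barrier argument for right derivatives
then keeps `‖V‖` in `[ρ₂, ρ₃]`.
-/

open Real Set

theorem image_le_of_deriv_right_neg_above {f f' : ℝ → ℝ} {a b M η : ℝ}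
    (hf : ContinuousOn f (Icc a b)) (hf' : ∀ x ∈ Ico a b, HasDerivWithinAt f (f' x) (Ici x) x)
    (ha : f a ≤ M) (hη : 0 < η) (hneg : ∀ x ∈ Ico a b, M < f x → f x < M + η → f' x < 0) :
    ∀ ⦃x⦄, x ∈ Icc a b → f x ≤ M := by
  intro x hx
  refine le_of_forall_pos_le_add fun δ hδ => ?_
  set δ' := min δ (η / 2)
  have hδ' : 0 < δ' := lt_min hδ (half_pos hη)
  have hfx : f x ≤ M + δ' :=
    image_le_of_deriv_right_lt_deriv_boundary' hf hf' (by linarith) continuousOn_const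
      (fun x _ => hasDerivWithinAt_const x _ _)
      (fun y hy hfy => hneg y hy (by linarith) (by linarith [min_le_right δ (η / 2)])) hx
  linarith [min_le_left δ (η / 2)]

theorem cubic_lt_of_lt {α β x y : ℝ} (hβ : 0 < β) (hx : 0 ≤ x) (hαx : α ≤ 3 * β * x ^ 2)
    (hxy : x < y) : (α - β * y ^ 2) * y < (α - β * x ^ 2) * x := by
  have hsum : 3 * x ^ 2 < x ^ 2 + x * y + y ^ 2 := by nlinarith
  have : α < β * (x ^ 2 + x * y + y ^ 2) := by nlinarith [mul_lt_mul_of_pos_left hsum hβ]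
  nlinarith

theorem lt_three_mul_sq_of_cubic_lt {α β r ρ : ℝ} (hβ : 0 < β) (hr : β * r ^ 2 = α) (hr0 : 0 ≤ r)
    (hρ : r / √3 ≤ ρ) (h : (α - β * ρ ^ 2) * ρ < 2 * α * r / (3 * √3)) : α < 3 * β * ρ ^ 2 := by
  have hs : 0 < √3 := by positivity
  have hs2 : √3 ^ 2 = 3 := sq_sqrt (by norm_num)
  have hle : α ≤ 3 * β * ρ ^ 2 := by
    have : (r / √3) ^ 2 ≤ ρ ^ 2 := pow_le_pow_left₀ (by positivity) hρ 2
    rw [div_pow, hs2] at this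
    nlinarith
  refine hle.lt_of_ne fun heq => h.not_ge ?_
  -- at `3βρ² = α` the cubic equals `2αρ/3`, which is at least its value `2αr/(3√3)` at `r/√3`
  have hα : 0 ≤ α := hr ▸ by positivity
  calc 2 * α * r / (3 * √3) = 2 * α / 3 * (r / √3) := by ring
    _ ≤ 2 * α / 3 * ρ := by gcongr
    _ = (α - β * ρ ^ 2) * ρ := by linear_combination (-ρ / 3) * heq

theorem abs_inner_sub_mul_norm_sq_le {E : Type*} [NormedAddCommGroup E] [InnerProductSpace ℝ E]
    (v w : E) (c : ℝ) : |inner ℝ v w - c * ‖v‖ ^ 2| ≤ ‖v‖ * ‖w - c • v‖ := by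
  have : inner ℝ v w - c * ‖v‖ ^ 2 = inner ℝ v (w - c • v) := by
    rw [inner_sub_right, real_inner_smul_right, real_inner_self_eq_norm_sq]
  rw [this]
  exact abs_real_inner_le_norm v _

section CharacteristicVelocity

variable {E : Type*} [NormedAddCommGroup E] [InnerProductSpace ℝ E] {α β ε A : ℝ}

theorem abs_mul_inner_sub_cubic_le (hε : 0 < ε) {v w : E}
    (h : ‖w - ((1 / ε) * (α - β * ‖v‖ ^ 2)) • v‖ ≤ A) :
    |ε * inner ℝ v w - (α - β * ‖v‖ ^ 2) * ‖v‖ * ‖v‖| ≤ ε * A * ‖v‖ := by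
  have key := abs_inner_sub_mul_norm_sq_le v w ((1 / ε) * (α - β * ‖v‖ ^ 2))
  have hmul : ε * inner ℝ v w - (α - β * ‖v‖ ^ 2) * ‖v‖ * ‖v‖ =
      ε * (inner ℝ v w - (1 / ε) * (α - β * ‖v‖ ^ 2) * ‖v‖ ^ 2) := by
    field_simp
  rw [hmul, abs_mul, abs_of_pos hε, mul_assoc ε A]
  refine mul_le_mul_of_nonneg_left (key.trans ?_) hε.le
  rw [mul_comm]
  exact mul_le_mul_of_nonneg_right h (norm_nonneg v)

theorem inner_neg_of_cubic_lt (hε : 0 < ε) {v w : E}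
    (h : ‖w - ((1 / ε) * (α - β * ‖v‖ ^ 2)) • v‖ ≤ A)
    (hlt : (α - β * ‖v‖ ^ 2) * ‖v‖ < -(ε * A)) : inner ℝ v w < 0 := by
  have key := (abs_le.1 (abs_mul_inner_sub_cubic_le hε h)).2
  have hA : 0 ≤ A := (norm_nonneg _).trans h
  have hv : 0 < ‖v‖ := by
    by_contra! hv
    have : ‖v‖ = 0 := le_antisymm hv (norm_nonneg v)
    rw [this] at hlt
    nlinarith
  have : ε * inner ℝ v w < 0 := by nlinarith
  nlinarith

theorem inner_pos_of_lt_cubic (hε : 0 < ε) {v w : E}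
    (h : ‖w - ((1 / ε) * (α - β * ‖v‖ ^ 2)) • v‖ ≤ A)
    (hlt : ε * A < (α - β * ‖v‖ ^ 2) * ‖v‖) : 0 < inner ℝ v w := by
  have key := (abs_le.1 (abs_mul_inner_sub_cubic_le hε h)).1
  have hA : 0 ≤ A := (norm_nonneg _).trans h
  have hv : 0 < ‖v‖ := by
    by_contra! hv
    have : ‖v‖ = 0 := le_antisymm hv (norm_nonneg v)
    rw [this] at hlt
    nlinarith
  have : 0 < ε * inner ℝ v w := by nlinarith
  nlinarith

theorem norm_le_of_characteristic (hε : 0 < ε) (hβ : 0 < β) {V V' : ℝ → E}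
    (hV : ∀ t ∈ Ici (0 : ℝ), HasDerivWithinAt V (V' t) (Ici 0) t)
    (hchar : ∀ t ∈ Ici (0 : ℝ), ‖V' t - ((1 / ε) * (α - β * ‖V t‖ ^ 2)) • V t‖ ≤ A)
    {ρ : ℝ} (hρ : 0 ≤ ρ) (hαρ : α ≤ 3 * β * ρ ^ 2) (hρA : (α - β * ρ ^ 2) * ρ = -(ε * A))
    (h0 : ‖V 0‖ ≤ ρ) {t : ℝ} (ht : 0 ≤ t) : ‖V t‖ ≤ ρ := by
  have hsq : ‖V t‖ ^ 2 ≤ ρ ^ 2 := by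
    refine image_le_of_deriv_right_neg_above (f := (‖V ·‖ ^ 2)) (η := 1)
      (fun x hx => (hV x hx.1).norm_sq.continuousWithinAt.mono Icc_subset_Ici_self)
      (fun x hx => ((hV x hx.1).mono (Ici_subset_Ici.2 hx.1)).norm_sq)
      (pow_le_pow_left₀ (norm_nonneg _) h0 2) one_pos (fun x hx hlt _ => ?_) ⟨ht, le_rfl⟩
    have hρx : ρ < ‖V x‖ := (sq_lt_sq₀ hρ (norm_nonneg _)).1 hlt
    have := inner_neg_of_cubic_lt hε (hchar x hx.1) (hρA ▸ cubic_lt_of_lt hβ hρ hαρ hρx)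
    linarith
  exact (sq_le_sq₀ (norm_nonneg _) hρ).1 hsq

theorem le_norm_of_characteristic (hε : 0 < ε) (hβ : 0 < β) {V V' : ℝ → E}
    (hV : ∀ t ∈ Ici (0 : ℝ), HasDerivWithinAt V (V' t) (Ici 0) t)
    (hchar : ∀ t ∈ Ici (0 : ℝ), ‖V' t - ((1 / ε) * (α - β * ‖V t‖ ^ 2)) • V t‖ ≤ A)
    {ρ : ℝ} (hρ : 0 ≤ ρ) (hαρ : α < 3 * β * ρ ^ 2) (hρA : (α - β * ρ ^ 2) * ρ = ε * A)
    (h0 : ρ ≤ ‖V 0‖) {t : ℝ} (ht : 0 ≤ t) : ρ ≤ ‖V t‖ := by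
  have hsq : -‖V t‖ ^ 2 ≤ -ρ ^ 2 := by
    -- the window `α/(3β) < ‖V‖² < ρ²` is where `g` is still decreasing
    refine image_le_of_deriv_right_neg_above (f := (-‖V ·‖ ^ 2)) (η := ρ ^ 2 - α / (3 * β))
      (fun x hx => (hV x hx.1).norm_sq.neg.continuousWithinAt.mono Icc_subset_Ici_self)
      (fun x hx => ((hV x hx.1).mono (Ici_subset_Ici.2 hx.1)).norm_sq.neg)
      (neg_le_neg (pow_le_pow_left₀ hρ h0 2)) ?_ (fun x hx hlo hhi => ?_) ⟨ht, le_rfl⟩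
    · rw [sub_pos, div_lt_iff₀ (by positivity)]
      linarith
    have hxρ : ‖V x‖ < ρ := (sq_lt_sq₀ (norm_nonneg _) hρ).1 (by linarith)
    have hαx : α ≤ 3 * β * ‖V x‖ ^ 2 := by
      have : α / (3 * β) < ‖V x‖ ^ 2 := by linarith
      rw [div_lt_iff₀ (by positivity)] at this
      linarith
    have := inner_pos_of_lt_cubic hε (hchar x hx.1)
      (hρA ▸ cubic_lt_of_lt hβ (norm_nonneg _) hαx hxρ)
    linarith
  exact (sq_le_sq₀ hρ (norm_nonneg _)).1 (neg_le_neg_iff.1 hsq)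

end CharacteristicVelocity

theorem stmt8_general (d : ℕ) (α β ε A : ℝ) (hα : 0 < α) (hβ : 0 < β) (hε : 0 < ε)
    (r : ℝ) (hr : r = Real.sqrt (α / β))
    (hεA : ε * A < 2 * α * r / (3 * Real.sqrt 3))
    (V V' : ℝ → EuclideanSpace ℝ (Fin d))
    (hVderiv : ∀ t ∈ Set.Ici (0:ℝ), HasDerivWithinAt V (V' t) (Set.Ici 0) t)
    (hchar : ∀ t ∈ Set.Ici (0:ℝ),
      ‖V' t - ((1 / ε) * (α - β * ‖V t‖ ^ 2)) • V t‖ ≤ A)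
    (ρ₂ : ℝ) (hρ₂mem : r / Real.sqrt 3 ≤ ρ₂ ∧ ρ₂ ≤ r)
    (hρ₂ : -(ε * A) + (α - β * ρ₂ ^ 2) * ρ₂ = 0)
    (ρ₃ : ℝ) (hρ₃r : r ≤ ρ₃) (hρ₃ : ε * A + (α - β * ρ₃ ^ 2) * ρ₃ = 0)
    (hV0 : ρ₂ ≤ ‖V 0‖ ∧ ‖V 0‖ ≤ ρ₃) :
    ∀ t ∈ Set.Ici (0:ℝ), ρ₂ ≤ ‖V t‖ ∧ ‖V t‖ ≤ ρ₃ := by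
  intro t ht
  have hr0 : 0 ≤ r := hr ▸ sqrt_nonneg _
  have hr2 : β * r ^ 2 = α := by
    rw [hr, sq_sqrt (div_nonneg hα.le hβ.le)]
    field_simp
  have hρ₂0 : 0 ≤ ρ₂ := (div_nonneg hr0 (sqrt_nonneg 3)).trans hρ₂mem.1
  have hρ₂α : α < 3 * β * ρ₂ ^ 2 :=
    lt_three_mul_sq_of_cubic_lt hβ hr2 hr0 hρ₂mem.1 (by linarith)
  have hρ₃α : α ≤ 3 * β * ρ₃ ^ 2 := by nlinarith [pow_le_pow_left₀ hr0 hρ₃r 2]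
  exact ⟨le_norm_of_characteristic hε hβ hVderiv hchar hρ₂0 hρ₂α (by linarith) hV0.1 ht,
    norm_le_of_characteristic hε hβ hVderiv hchar (hr0.trans hρ₃r) hρ₃α (by linarith) hV0.2 ht⟩

/-- Fix `α, β > 0`, `r = √(α/β)`, `A ≥ 0`, `ε > 0` with
`εA < 2αr/(3√3)`. Let `ρ₂ ∈ [r/√3, r]` be the (larger) zero of
`ρ ↦ −εA + (α − βρ²)ρ` and `ρ₃ ∈ [r,∞)` the zero of `ρ ↦ εA + (α − βρ²)ρ`.
If `V` is an `(ε,A)`-characteristic velocity with `ρ₂ ≤ |V(0)| ≤ ρ₃`, then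
`ρ₂ ≤ |V(t)| ≤ ρ₃` for all `t ≥ 0`. -/
theorem stmt8 (d : ℕ) (α β ε A : ℝ) (hα : 0 < α) (hβ : 0 < β) (hε : 0 < ε)
    (hA : 0 ≤ A) (r : ℝ) (hr : r = Real.sqrt (α / β))
    (hεA : ε * A < 2 * α * r / (3 * Real.sqrt 3))
    (V V' : ℝ → EuclideanSpace ℝ (Fin d))
    (hV'cont : ContinuousOn V' (Set.Ici 0))
    (hVderiv : ∀ t ∈ Set.Ici (0:ℝ), HasDerivWithinAt V (V' t) (Set.Ici 0) t)
    (hchar : ∀ t ∈ Set.Ici (0:ℝ),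
      ‖V' t - ((1 / ε) * (α - β * ‖V t‖ ^ 2)) • V t‖ ≤ A)
    (ρ₂ : ℝ) (hρ₂mem : r / Real.sqrt 3 ≤ ρ₂ ∧ ρ₂ ≤ r)
    (hρ₂ : -(ε * A) + (α - β * ρ₂ ^ 2) * ρ₂ = 0)
    (ρ₃ : ℝ) (hρ₃r : r ≤ ρ₃) (hρ₃ : ε * A + (α - β * ρ₃ ^ 2) * ρ₃ = 0)
    (hV0 : ρ₂ ≤ ‖V 0‖ ∧ ‖V 0‖ ≤ ρ₃) :
    ∀ t ∈ Set.Ici (0:ℝ), ρ₂ ≤ ‖V t‖ ∧ ‖V t‖ ≤ ρ₃ :=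
  stmt8_general d α β ε A hα hβ hε r hr hεA V V' hVderiv hchar ρ₂ hρ₂mem hρ₂ ρ₃ hρ₃r hρ₃ hV0
end

section
/- Fix α, β > 0 and set r = √(α/β), and define V(s; v) = r e^{αs} v / √(|v|²(e^{2αs} − 1) + r²) for v ∈ ℝ^d, v ≠ 0, and s ≥ 0. Then for each fixed s ≥ 0 the map v ↦ V(s; v) is differentiable at every v ≠ 0, with Fréchet derivative given by (∂V/∂v)(s; v) w = (|V(s; v)|/|v|) [ w − (1 − e^{−2αs}) (V(s; v) · w) V(s; v)/r² ] for all w ∈ ℝ^d; equivalently (∂V/∂v)(s; v) = (|V(s; v)|/|v|) ( I − (V(s; v) ⊗ V(s; v)/r²)(1 − e^{−2αs}) ). -/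
open Real Set

/-!
`V(s; ·)` is the radial field `v ↦ φ(‖v‖²) • v` with `φ(t) = r e^{αs} / √(t (e^{2αs} − 1) + r²)`,
so its derivative is `φ(‖v‖²) I + 2 φ'(‖v‖²) v ⊗ v`. For this profile
`2φ'/φ = −(e^{2αs} − 1) / (‖v‖² (e^{2αs} − 1) + r²) = −(1 − e^{−2αs}) φ² / r²`, and `φ² v ⊗ v = V ⊗ V`.
-/

section RadialVectorField

variable {F : Type*} [NormedAddCommGroup F] [InnerProductSpace ℝ F]

theorem HasDerivAt.hasFDerivAt_smul_norm_sq {φ : ℝ → ℝ} {φ' : ℝ} {v : F}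
    (hφ : HasDerivAt φ φ' (‖v‖ ^ 2)) :
    HasFDerivAt (fun w => φ (‖w‖ ^ 2) • w)
      (φ (‖v‖ ^ 2) • ContinuousLinearMap.id ℝ F + (2 * φ') • (innerSL ℝ v).smulRight v) v := by
  refine ((hφ.comp_hasFDerivAt v (hasFDerivAt_id v).norm_sq).smul
    (hasFDerivAt_id v)).congr_fderiv ?_
  ext w
  simp [smul_smul]
  ring_nf

theorem smul_id_sub_smul_innerSL_smulRight_smul (φ c : ℝ) (v : F) :
    φ • (ContinuousLinearMap.id ℝ F - c • (innerSL ℝ (φ • v)).smulRight (φ • v)) =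
      φ • ContinuousLinearMap.id ℝ F + (-(c * φ ^ 2) * φ) • (innerSL ℝ v).smulRight v := by
  ext w
  simp only [add_apply, sub_apply, smul_apply, ContinuousLinearMap.smulRight_apply,
    innerSL_apply_apply, ContinuousLinearMap.id_apply, real_inner_smul_left, smul_sub, smul_smul]
  match_scalars <;> ring

end RadialVectorField

theorem hasDerivAt_div_sqrt_mul_add {a b c t : ℝ} (h : 0 < t * a + b) :
    HasDerivAt (fun t => c / √(t * a + b)) (-(a / 2) * (c / √(t * a + b)) / (t * a + b)) t := by
  have hsqrt : HasDerivAt (fun t => √(t * a + b)) (a / (2 * √(t * a + b))) t := by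
    simpa using (((hasDerivAt_id' t).mul_const a).add_const b).sqrt h.ne'
  refine ((hasDerivAt_const t c).div hsqrt (sqrt_pos.2 h).ne').congr_deriv ?_
  rw [sq_sqrt h.le]
  ring

theorem exp_sq_mul_one_sub_exp_neg (x : ℝ) :
    exp x ^ 2 * (1 - exp (-(2 * x))) = exp (2 * x) - 1 := by
  rw [mul_sub, mul_one, ← exp_nat_mul, ← exp_add]
  norm_num

/-- Fix `α, β > 0`, `r = √(α/β)`, and let
`V(s;v) = r e^{αs} v / √(|v|²(e^{2αs} − 1) + r²)` for `s ≥ 0`, `v ≠ 0`. Then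
for each fixed `s ≥ 0` the map `v ↦ V(s;v)` is (Fréchet) differentiable at
every `v ≠ 0`, with derivative
`w ↦ (|V(s;v)|/|v|) (w − (1 − e^{−2αs}) ⟪V(s;v), w⟫ V(s;v)/r²)`, i.e.
`∂V/∂v = (|V|/|v|)(I − (V ⊗ V/r²)(1 − e^{−2αs}))`. -/
theorem stmt12 (d : ℕ) (α β : ℝ) (hα : 0 < α) (hβ : 0 < β)
    (r : ℝ) (hr : r = Real.sqrt (α / β))
    (V : ℝ → EuclideanSpace ℝ (Fin d) → EuclideanSpace ℝ (Fin d))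
    (hV : V = fun s v =>
      (r * Real.exp (α * s) /
        Real.sqrt (‖v‖ ^ 2 * (Real.exp (2 * α * s) - 1) + r ^ 2)) • v) :
    ∀ s ∈ Set.Ici (0:ℝ), ∀ v : EuclideanSpace ℝ (Fin d), v ≠ 0 →
      HasFDerivAt (fun w => V s w)
        ((‖V s v‖ / ‖v‖) •
          (ContinuousLinearMap.id ℝ (EuclideanSpace ℝ (Fin d)) -
            ((1 - Real.exp (-(2 * α * s))) / r ^ 2) •
              ((innerSL ℝ (V s v)).smulRight (V s v)))) v := by
  subst hV
  intro s hs v hv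
  beta_reduce
  have hr0 : 0 < r := hr ▸ sqrt_pos.2 (div_pos hα hβ)
  have hexp : exp (α * s) ^ 2 * (1 - exp (-(2 * α * s))) = exp (2 * α * s) - 1 := by
    simpa only [mul_assoc] using exp_sq_mul_one_sub_exp_neg (α * s)
  set E := exp (2 * α * s) - 1
  set q := ‖v‖ ^ 2 * E + r ^ 2
  set φ := r * exp (α * s) / √q
  have hq : 0 < q := by
    have : 0 ≤ E := sub_nonneg.2 (one_le_exp (by have := mem_Ici.1 hs; positivity))
    positivity
  have hnorm : ‖φ • v‖ / ‖v‖ = φ := by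
    rw [norm_smul, norm_of_nonneg (by positivity), mul_div_cancel_right₀ _ (norm_ne_zero_iff.2 hv)]
  have hφsq : (1 - exp (-(2 * α * s))) / r ^ 2 * φ ^ 2 = E / q := by
    rw [← hexp, div_pow, mul_pow, sq_sqrt hq.le]
    field_simp
  have hφ : HasDerivAt (fun t => r * exp (α * s) / √(t * E + r ^ 2)) (-(E / 2) * φ / q)
      (‖v‖ ^ 2) :=
    hasDerivAt_div_sqrt_mul_add hq
  rw [hnorm, smul_id_sub_smul_innerSL_smulRight_smul, hφsq,
    show -(E / q) * φ = 2 * (-(E / 2) * φ / q) by ring]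
  exact hφ.hasFDerivAt_smul_norm_sq
end

section
/- Fix α, β > 0 and set r = √(α/β). For v ∈ ℝ^d let V(s; v) = r e^{αs} v / √(|v|²(e^{2αs} − 1) + r²), defined for s ∈ (S(v), ∞) where S(v) = −∞ if |v| ≤ r and S(v) = (1/(2α)) ln(1 − r²/|v|²) if |v| > r. Then: (i) if 0 < |v| < r, the function s ↦ |V(s; v)| is strictly increasing on ℝ; (ii) if |v| = r, then |V(s; v)| = r for all s; (iii) if |v| > r, the function s ↦ |V(s; v)| is strictly decreasing on (S(v), ∞). -/
open Real Set

/-! Pulling `e^{αs}` out of the square root gives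
`|V(s;v)| = r|v| / √(|v|² + (r² - |v|²) e^{-2αs})`. As `e^{-2αs}` decreases, the sign of
`r² - |v|²` decides whether the denominator decreases, is constant, or increases; for `|v| > r`
it is positive precisely for `s > S(v)`. -/

lemma div_sqrt_lt_div_sqrt {C x y : ℝ} (hC : 0 < C) (hx : 0 < x) (hxy : x < y) :
    C / √y < C / √x :=
  div_lt_div_of_pos_left hC (sqrt_pos.2 hx) (sqrt_lt_sqrt hx.le hxy)

lemma norm_smul_exp_div_sqrt {E : Type*} [NormedAddCommGroup E] [NormedSpace ℝ E]
    (α s : ℝ) {c : ℝ} (hc : 0 ≤ c) (v : E) :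
    ‖(c * exp (α * s) / √(‖v‖ ^ 2 * (exp (2 * α * s) - 1) + c ^ 2)) • v‖ =
      c * ‖v‖ / √(‖v‖ ^ 2 + (c ^ 2 - ‖v‖ ^ 2) * exp (-(2 * α * s))) := by
  have hsq : exp (α * s) ^ 2 = exp (2 * α * s) := by rw [← exp_nat_mul]; ring_nf
  have hinv : exp (2 * α * s) * exp (-(2 * α * s)) = 1 := by rw [← exp_add]; simp
  have hfactor : ‖v‖ ^ 2 * (exp (2 * α * s) - 1) + c ^ 2 =
      exp (α * s) ^ 2 * (‖v‖ ^ 2 + (c ^ 2 - ‖v‖ ^ 2) * exp (-(2 * α * s))) := by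
    rw [hsq]; linear_combination (‖v‖ ^ 2 - c ^ 2) * hinv
  rw [norm_smul, Real.norm_of_nonneg (by positivity), hfactor, sqrt_mul (sq_nonneg _),
    sqrt_sq (exp_pos _).le, mul_comm c, mul_div_mul_left _ _ (exp_pos _).ne', mul_comm,
    ← mul_div_assoc, mul_comm]

lemma pos_of_log_one_sub_div_lt {α c a s : ℝ} (hα : 0 < α) (hc : 0 ≤ c) (hca : c < a)
    (hs : 1 / (2 * α) * log (1 - c ^ 2 / a ^ 2) < s) :
    0 < a ^ 2 + (c ^ 2 - a ^ 2) * exp (-(2 * α * s)) := by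
  have ha : 0 < a := hc.trans_lt hca
  have hpos : 0 < 1 - c ^ 2 / a ^ 2 := by
    rw [sub_pos, div_lt_one (by positivity)]; nlinarith
  have hlog : log (1 - c ^ 2 / a ^ 2) < 2 * α * s := by
    rwa [one_div_mul_eq_div, div_lt_iff₀' (by positivity)] at hs
  have hexp : a ^ 2 - c ^ 2 < a ^ 2 * exp (2 * α * s) := by
    have := mul_lt_mul_of_pos_left ((log_lt_iff_lt_exp hpos).1 hlog) (pow_pos ha 2)
    rwa [mul_sub, mul_one, mul_div_cancel₀ _ (by positivity)] at this
  have hinv : exp (2 * α * s) * exp (-(2 * α * s)) = 1 := by rw [← exp_add]; simp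
  nlinarith [exp_pos (-(2 * α * s))]

/-- Fix `α, β > 0`, `r = √(α/β)`, and let
`V(s;v) = r e^{αs} v / √(|v|²(e^{2αs} − 1) + r²)` on `s ∈ (S(v), ∞)`, with
`S(v) = −∞` for `|v| ≤ r` and `S(v) = (1/(2α)) ln(1 − r²/|v|²)` for `|v| > r`.
Then (i) for `0 < |v| < r`, `s ↦ |V(s;v)|` is strictly increasing on `ℝ`;
(ii) for `|v| = r`, `|V(s;v)| = r` for all `s`; (iii) for `|v| > r`,
`s ↦ |V(s;v)|` is strictly decreasing on `(S(v), ∞)`. -/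
theorem stmt13 (d : ℕ) (α β : ℝ) (hα : 0 < α) (hβ : 0 < β)
    (r : ℝ) (hr : r = Real.sqrt (α / β))
    (V : ℝ → EuclideanSpace ℝ (Fin d) → EuclideanSpace ℝ (Fin d))
    (hV : V = fun s v =>
      (r * Real.exp (α * s) /
        Real.sqrt (‖v‖ ^ 2 * (Real.exp (2 * α * s) - 1) + r ^ 2)) • v) :
    (∀ v : EuclideanSpace ℝ (Fin d), 0 < ‖v‖ → ‖v‖ < r →
      StrictMono fun s => ‖V s v‖) ∧
    (∀ v : EuclideanSpace ℝ (Fin d), ‖v‖ = r → ∀ s, ‖V s v‖ = r) ∧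
    (∀ v : EuclideanSpace ℝ (Fin d), r < ‖v‖ →
      StrictAntiOn (fun s => ‖V s v‖)
        (Set.Ioi (1 / (2 * α) * Real.log (1 - r ^ 2 / ‖v‖ ^ 2)))) := by
  have hr0 : 0 < r := hr ▸ sqrt_pos.2 (div_pos hα hβ)
  have hexp_anti : StrictAnti fun s => exp (-(2 * α * s)) := fun s t hst =>
    exp_lt_exp.2 (by nlinarith)
  subst hV
  simp only [norm_smul_exp_div_sqrt α _ hr0.le]
  refine ⟨fun v hv0 hvr s t hst => ?_, fun v hvr s => ?_, fun v hvr s hs t _ hst => ?_⟩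
  · have hk : 0 < r ^ 2 - ‖v‖ ^ 2 := by nlinarith
    exact div_sqrt_lt_div_sqrt (by positivity) (by positivity)
      (add_lt_add_right (mul_lt_mul_of_pos_left (hexp_anti hst) hk) _)
  · rw [hvr, sub_self, zero_mul, add_zero, sqrt_sq hr0.le, mul_self_div_self]
  · have hk : r ^ 2 - ‖v‖ ^ 2 < 0 := by nlinarith
    exact div_sqrt_lt_div_sqrt (mul_pos hr0 (hr0.trans hvr))
      (pos_of_log_one_sub_div_lt hα hr0.le hvr hs)
      (add_lt_add_right (mul_lt_mul_of_neg_left (hexp_anti hst) hk) _)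
end

section
/- Fix α, β > 0, set r = √(α/β), let A ≥ 0 and 0 < r₀ < r. There exists ε₀ > 0 (depending only on α, β, A, r₀) such that for every 0 < ε < ε₀ the following holds: if V : [0, ∞) → ℝ^d is an (ε, A)-characteristic velocity with r₀ ≤ |V(0)| < ρ₂^ε(−A) − ε, then there exists a time t₁ with 0 ≤ t₁ ≤ (ε/(2βr₀²)) ln((r − r₀)/ε) such that |V(t₁)| = ρ₂^ε(−A) − ε. -/
/-!
Projecting the equation on `V` gives `⟪V, V'⟫ ≥ ‖V‖ ((α - β‖V‖²)‖V‖ - εA) / ε`, and the root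
`ρ = ρ₂(ε)` of `(α - βρ²)ρ = εA` tends to `r` as `ε → 0`. Once `r² - ρ²` is small compared
with `r₀(r - r₀)`, the drift `(α - βφ²)φ - εA` dominates `2βr₀²(ρ - φ)` for `r₀ ≤ φ < ρ`, so a
first-contact argument keeps `‖V t‖` above the barrier `ρ - (ρ - ‖V 0‖) exp(-2βr₀² t / ε)`. At
`t = (ε / (2βr₀²)) ln((r - r₀) / ε)` the barrier exceeds `ρ - ε`, and the intermediate value
theorem gives the hitting time.
-/

open Real Set

lemma cubic_drift_gt {α β r r₀ ρ φ ε A : ℝ} (hε : 0 < ε) (hβ : 0 < β) (hα : α = β * r ^ 2)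
    (hr₀ : 0 < r₀) (hr₀r : r₀ < r) (hroot : (α - β * ρ ^ 2) * ρ = ε * A)
    (hρ : r ^ 2 - ρ ^ 2 < r₀ * (r - r₀) / 2) (hφ : r₀ ≤ φ) (hφρ : φ < ρ) :
    2 * β * r₀ ^ 2 / ε * (ρ - φ) < 1 / ε * (α - β * φ ^ 2) * φ - A := by
  have hρmid : (r + r₀) / 2 < ρ := by
    nlinarith [sq_nonneg (ρ - (r + r₀) / 2), sq_nonneg (ρ + (r + r₀) / 2)]
  have hfac : 2 * r₀ ^ 2 < φ ^ 2 + φ * ρ + ρ ^ 2 - r ^ 2 := by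
    nlinarith [mul_le_mul_of_nonneg_right hφ (by linarith : (0:ℝ) ≤ ρ),
      mul_le_mul_of_nonneg_left hφ hr₀.le]
  -- (α - βφ²)φ - (α - βρ²)ρ = β(ρ - φ)(φ² + φρ + ρ² - r²)
  have hcubic : 2 * β * r₀ ^ 2 * (ρ - φ) < (α - β * φ ^ 2) * φ - ε * A := by
    subst hα
    nlinarith [mul_lt_mul_of_pos_left hfac (mul_pos hβ (sub_pos.mpr hφρ))]
  rw [div_mul_eq_mul_div, div_lt_iff₀ hε]
  have : (1 / ε * (α - β * φ ^ 2) * φ - A) * ε = (α - β * φ ^ 2) * φ - ε * A := by field_simp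
  linarith

lemma sq_sub_sq_lt_of_root {α β r ρ e δ : ℝ} (hβ : 0 < β) (hα : α = β * r ^ 2) (hr : 0 < r)
    (hρ : r ≤ √3 * ρ) (hρr : ρ ≤ r) (hroot : (α - β * ρ ^ 2) * ρ = e)
    (he : √3 * e < β * r * δ) : r ^ 2 - ρ ^ 2 < δ := by
  have hρ0 : 0 < ρ := pos_of_mul_pos_right (hr.trans_le hρ) (sqrt_nonneg 3)
  have hgap : 0 ≤ r ^ 2 - ρ ^ 2 := sub_nonneg.mpr (pow_le_pow_left₀ hρ0.le hρr 2)
  have : β * r * (r ^ 2 - ρ ^ 2) ≤ √3 * e := by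
    subst hα hroot
    nlinarith [mul_le_mul_of_nonneg_left hρ (mul_nonneg hβ.le hgap)]
  exact lt_of_mul_lt_mul_left (this.trans_lt he) (by positivity)

lemma inner_ge_of_norm_sub_smul_le {E : Type*} [NormedAddCommGroup E] [InnerProductSpace ℝ E]
    {v w : E} {c A : ℝ} (h : ‖w - c • v‖ ≤ A) :
    c * ‖v‖ ^ 2 - A * ‖v‖ ≤ inner ℝ v w := by
  have hCS : |inner ℝ v (w - c • v)| ≤ A * ‖v‖ :=
    (abs_real_inner_le_norm _ _).trans (by rw [mul_comm]; gcongr)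
  rw [inner_sub_right, real_inner_smul_right, real_inner_self_eq_norm_sq] at hCS
  linarith [(abs_le.mp hCS).1]

lemma hasDerivAt_sub_mul_exp_neg_mul (ρ c κ s : ℝ) :
    HasDerivAt (fun s => ρ - c * exp (-(κ * s))) (κ * (c * exp (-(κ * s)))) s := by
  have hlin : HasDerivAt (fun s => -(κ * s)) (-κ) s := by
    simpa using (hasDerivAt_id s).const_mul (-κ)
  exact ((hlin.exp.const_mul c).const_sub ρ).congr_deriv (by ring)

lemma mul_exp_neg_mul_log_div_le {a ε D L : ℝ} (ha : 0 < a) (hε : 0 < ε) (hL : 0 < L)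
    (hD : D ≤ L) : D * exp (-(a / ε * (ε / a * log (L / ε)))) ≤ ε := by
  rw [show a / ε * (ε / a * log (L / ε)) = log (L / ε) by field_simp, exp_neg,
    exp_log (by positivity), inv_div]
  calc D * (ε / L) ≤ L * (ε / L) := by gcongr
    _ = ε := by field_simp

lemma le_norm_of_radial_drift {E : Type*} [NormedAddCommGroup E] [InnerProductSpace ℝ E]
    {V V' : ℝ → E} {k : ℝ → ℝ} {A κ ρ : ℝ}
    (hV : ∀ t ∈ Ici (0:ℝ), HasDerivWithinAt V (V' t) (Ici 0) t)
    (hdrift : ∀ t ∈ Ici (0:ℝ), ‖V' t - k ‖V t‖ • V t‖ ≤ A)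
    (hV0 : 0 < ‖V 0‖) (hV0ρ : ‖V 0‖ < ρ) (hκ : 0 ≤ κ)
    (hgrowth : ∀ φ ∈ Ico ‖V 0‖ ρ, κ * (ρ - φ) < k φ * φ - A) {T : ℝ} (hT : 0 ≤ T) :
    ρ - (ρ - ‖V 0‖) * exp (-(κ * T)) ≤ ‖V T‖ := by
  set B : ℝ → ℝ := fun s => ρ - (ρ - ‖V 0‖) * exp (-(κ * s)) with hB
  have hB' (s : ℝ) : HasDerivAt B (κ * (ρ - B s)) s :=
    (hasDerivAt_sub_mul_exp_neg_mul ρ (ρ - ‖V 0‖) κ s).congr_deriv (by simp only [hB]; ring)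
  have hB_ge (s : ℝ) (hs : 0 ≤ s) : ‖V 0‖ ≤ B s := by
    have : exp (-(κ * s)) ≤ 1 := exp_le_one_iff.mpr (by nlinarith)
    have := mul_le_of_le_one_right (sub_pos.mpr hV0ρ).le this
    simp only [hB]; linarith
  have hB_lt (s : ℝ) : B s < ρ := by
    have := mul_pos (sub_pos.mpr hV0ρ) (exp_pos (-(κ * s)))
    simp only [hB]; linarith
  have hsq : ∀ s ∈ Icc 0 T, B s ^ 2 ≤ ‖V s‖ ^ 2 := by
    refine image_le_of_deriv_right_lt_deriv_boundary'
      (f' := fun s => 2 * B s * (κ * (ρ - B s))) (B' := fun s => 2 * inner ℝ (V s) (V' s))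
      (fun s _ => ((hB' s).pow 2).continuousAt.continuousWithinAt)
      (fun s _ => ((hB' s).pow 2).hasDerivWithinAt.congr_deriv (by ring))
      (by simp [hB])
      (fun s hs => ((hV s hs.1).continuousWithinAt.mono fun _ h => h.1).norm.pow 2)
      (fun s hs => ((hV s hs.1).mono (Ici_subset_Ici.mpr hs.1)).norm_sq) ?_
    intro s hs hcontact
    have hBs := hB_ge s hs.1
    have hφ : ‖V s‖ = B s := (sq_eq_sq₀ (norm_nonneg _) (hV0.le.trans hBs)).1 hcontact.symm
    have hinner := inner_ge_of_norm_sub_smul_le (hdrift s hs.1)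
    have hgrow := hgrowth (B s) ⟨hBs, hB_lt s⟩
    rw [hφ] at hinner
    nlinarith [mul_lt_mul_of_pos_left hgrow (hV0.trans_le hBs)]
  exact (pow_le_pow_iff_left₀ (hV0.le.trans (hB_ge T hT)) (norm_nonneg _) two_ne_zero).1
    (hsq T ⟨hT, le_rfl⟩)

lemma exists_norm_eq_of_radial_drift {E : Type*} [NormedAddCommGroup E] [InnerProductSpace ℝ E]
    {V V' : ℝ → E} {k : ℝ → ℝ} {A κ ρ y T : ℝ}
    (hV : ∀ t ∈ Ici (0:ℝ), HasDerivWithinAt V (V' t) (Ici 0) t)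
    (hdrift : ∀ t ∈ Ici (0:ℝ), ‖V' t - k ‖V t‖ • V t‖ ≤ A)
    (hV0 : 0 < ‖V 0‖) (hV0ρ : ‖V 0‖ < ρ) (hκ : 0 ≤ κ)
    (hgrowth : ∀ φ ∈ Ico ‖V 0‖ ρ, κ * (ρ - φ) < k φ * φ - A) (hT : 0 ≤ T)
    (hV0y : ‖V 0‖ ≤ y) (hyT : (ρ - ‖V 0‖) * exp (-(κ * T)) ≤ ρ - y) :
    ∃ t ∈ Icc 0 T, ‖V t‖ = y :=
  intermediate_value_Icc hT (fun s hs => ((hV s hs.1).continuousWithinAt.mono fun _ h => h.1).norm)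
    ⟨hV0y, by linarith [le_norm_of_radial_drift hV hdrift hV0 hV0ρ hκ hgrowth hT]⟩

/-- Fix `α, β > 0`, `r = √(α/β)`, `A ≥ 0`, `0 < r₀ < r`.
Suppose `ρ₂ ε` denotes, for each admissible `ε` (i.e. `0 < ε` with
`εA < 2αr/(3√3)`), the larger zero in `[r/√3, r]` of `ρ ↦ −εA + (α − βρ²)ρ`.
Then there exists `ε₀ > 0` (with every `ε < ε₀` admissible) such that for all
`0 < ε < ε₀`: any `(ε,A)`-characteristic velocity `V` with
`r₀ ≤ |V(0)| < ρ₂ ε − ε` reaches the value `ρ₂ ε − ε` at some time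
`t₁ ∈ [0, (ε/(2βr₀²)) ln((r − r₀)/ε)]`. -/
theorem stmt14 (d : ℕ) (α β A r₀ : ℝ) (hα : 0 < α) (hβ : 0 < β) (hA : 0 ≤ A)
    (r : ℝ) (hr : r = Real.sqrt (α / β)) (hr₀ : 0 < r₀) (hr₀r : r₀ < r)
    (ρ₂ : ℝ → ℝ)
    (hρ₂ : ∀ ε, 0 < ε → ε * A < 2 * α * r / (3 * Real.sqrt 3) →
      (r / Real.sqrt 3 ≤ ρ₂ ε ∧ ρ₂ ε ≤ r ∧
        -(ε * A) + (α - β * (ρ₂ ε) ^ 2) * ρ₂ ε = 0)) :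
    ∃ ε₀ : ℝ, 0 < ε₀ ∧ ε₀ * A ≤ 2 * α * r / (3 * Real.sqrt 3) ∧
      ∀ ε, 0 < ε → ε < ε₀ →
        ∀ V V' : ℝ → EuclideanSpace ℝ (Fin d),
          ContinuousOn V' (Set.Ici 0) →
          (∀ t ∈ Set.Ici (0:ℝ), HasDerivWithinAt V (V' t) (Set.Ici 0) t) →
          (∀ t ∈ Set.Ici (0:ℝ),
            ‖V' t - ((1 / ε) * (α - β * ‖V t‖ ^ 2)) • V t‖ ≤ A) →
          r₀ ≤ ‖V 0‖ → ‖V 0‖ < ρ₂ ε - ε →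
          ∃ t₁ : ℝ, 0 ≤ t₁ ∧
            t₁ ≤ ε / (2 * β * r₀ ^ 2) * Real.log ((r - r₀) / ε) ∧
            ‖V t₁‖ = ρ₂ ε - ε := by
  have hr_pos : 0 < r := hr ▸ sqrt_pos.mpr (div_pos hα hβ)
  have hα_eq : α = β * r ^ 2 := by rw [hr, sq_sqrt (div_pos hα hβ).le]; field_simp
  have hs3 : (0 : ℝ) < √3 := by positivity
  have hr₀r' := sub_pos.mpr hr₀r
  set b := 2 * α * r / (3 * √3)
  -- `ε * A < c` forces `r ^ 2 - ρ₂ ε ^ 2 < r₀ * (r - r₀) / 2`, since `ρ₂ ε ≥ r / √3`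
  set c := β * r * (r₀ * (r - r₀) / 2) / √3
  obtain ⟨ε₀, hε₀, hε₀A⟩ :=
    exists_pos_mul_lt (lt_min (by positivity : 0 < b) (by positivity : 0 < c)) A
  refine ⟨ε₀, hε₀, by linarith [min_le_left b c], ?_⟩
  intro ε hε hεε₀ V V' _ hV hdrift hV0 hV0ρ
  have hεA : ε * A < min b c :=
    (mul_le_mul_of_nonneg_right hεε₀.le hA).trans_lt (mul_comm A ε₀ ▸ hε₀A)
  obtain ⟨hρ_ge, hρ_le, hroot⟩ := hρ₂ ε hε (hεA.trans_le (min_le_left _ _))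
  set ρ := ρ₂ ε
  have hgap : r ^ 2 - ρ ^ 2 < r₀ * (r - r₀) / 2 :=
    sq_sub_sq_lt_of_root (e := ε * A) hβ hα_eq hr_pos ((div_le_iff₀' hs3).mp hρ_ge) hρ_le
      (by linarith) (by rw [← lt_div_iff₀' hs3]; exact hεA.trans_le (min_le_right _ _))
  have hεr : ε < r - r₀ := by linarith
  have hT : 0 ≤ ε / (2 * β * r₀ ^ 2) * log ((r - r₀) / ε) :=
    mul_nonneg (by positivity) (log_nonneg ((one_le_div hε).mpr hεr.le))
  obtain ⟨t₁, ht₁, hval⟩ := exists_norm_eq_of_radial_drift (k := fun φ => 1 / ε * (α - β * φ ^ 2))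
    hV hdrift (hr₀.trans_le hV0) (by linarith) (by positivity)
    (fun φ hφ => cubic_drift_gt hε hβ hα_eq hr₀ hr₀r (by linarith) hgap (hV0.trans hφ.1) hφ.2)
    hT hV0ρ.le
    (by rw [sub_sub_cancel]
        exact mul_exp_neg_mul_log_div_le (by positivity) hε hr₀r' (by linarith))
  exact ⟨t₁, ht₁.1, ht₁.2, hval⟩
end

section
/- Fix α, β > 0, set r = √(α/β), let A ≥ 0 and R₀ > r. There exists ε₀ > 0 (depending only on α, β, A, R₀) such that for every 0 < ε < ε₀ the following holds: if V : [0, ∞) → ℝ^d is an (ε, A)-characteristic velocity with ρ₃^ε(A) + ε < |V(0)| ≤ R₀, then there exists a time t₂ with 0 ≤ t₂ ≤ (ε/(2βr²)) ln((R₀ − r)/ε) such that |V(t₂)| = ρ₃^ε(A) + ε. -/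
open Real Set

/-! Write `P = ρ₃ ε`. Since `P ≥ r` is a root of `ρ ↦ εA + (α − βρ²)ρ`, factoring out `ρ − P`
gives `εA + (α − βρ²)ρ < −2βr² (ρ − P)` for `ρ > P`, so wherever `|V| > P` the characteristic
inequality yields `⟪V, V'⟫ < −(2βr²/ε) |V| (|V| − P)`. Comparing `|V|²` with the squared barrier
`(P + (R₀ − P) e^{−2βr² t/ε})²` gives `|V(T)| ≤ P + ε` at `T = (ε/(2βr²)) ln((R₀ − r)/ε)`,
and the intermediate value theorem yields `t₂`. -/

theorem cubic_lt_of_root {α β r c P ρ : ℝ} (hβ : 0 < β) (hr : 0 ≤ r) (hβr : β * r ^ 2 = α)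
    (hrP : r ≤ P) (hPρ : P < ρ) (hroot : c + (α - β * P ^ 2) * P = 0) :
    c + (α - β * ρ ^ 2) * ρ < -(2 * β * r ^ 2) * (ρ - P) := by
  have hfactor : c + (α - β * ρ ^ 2) * ρ = (ρ - P) * (α - β * (ρ ^ 2 + ρ * P + P ^ 2)) := by
    linear_combination hroot
  have hsum : 3 * r ^ 2 < ρ ^ 2 + ρ * P + P ^ 2 := by nlinarith
  have hslope : α - β * (ρ ^ 2 + ρ * P + P ^ 2) < -(2 * β * r ^ 2) := by nlinarith
  rw [hfactor, mul_comm _ (ρ - P)]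
  exact mul_lt_mul_of_pos_left hslope (sub_pos.2 hPρ)

section InnerProductSpace

variable {E : Type*} [NormedAddCommGroup E] [InnerProductSpace ℝ E]

theorem inner_le_of_norm_sub_smul_le {v w : E} {c A : ℝ} (h : ‖w - c • v‖ ≤ A) :
    inner ℝ v w ≤ ‖v‖ * A + c * ‖v‖ ^ 2 := by
  have hsplit : inner ℝ v w = inner ℝ v (w - c • v) + c * ‖v‖ ^ 2 := by
    rw [inner_sub_right, real_inner_smul_right, real_inner_self_eq_norm_sq]
    ring
  have hcs : inner ℝ v (w - c • v) ≤ ‖v‖ * A :=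
    (real_inner_le_norm v _).trans (mul_le_mul_of_nonneg_left h (norm_nonneg v))
  linarith

theorem norm_le_exp_barrier {V V' : ℝ → E} {P δ k T : ℝ} (hP : 0 ≤ P) (hδ : 0 < δ)
    (hV : ContinuousOn V (Icc 0 T)) (hV' : ∀ t ∈ Ico 0 T, HasDerivWithinAt V (V' t) (Ici t) t)
    (hradial : ∀ t ∈ Ico 0 T, P < ‖V t‖ → inner ℝ (V t) (V' t) < -k * ‖V t‖ * (‖V t‖ - P))
    (h0 : ‖V 0‖ ≤ P + δ) :
    ∀ t ∈ Icc 0 T, ‖V t‖ ≤ P + δ * exp (-k * t) := by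
  set m : ℝ → ℝ := fun t => P + δ * exp (-k * t) with hm
  have hm_gt : ∀ t, P < m t := fun t => lt_add_of_pos_right P (by positivity)
  have hm_nonneg : ∀ t, 0 ≤ m t := fun t => hP.trans (hm_gt t).le
  have hm_deriv : ∀ t, HasDerivAt (fun t => m t ^ 2) (2 * m t * (-k * (m t - P))) t := by
    intro t
    have hexp : HasDerivAt (fun t => exp (-k * t)) (exp (-k * t) * -k) t := by
      simpa using ((hasDerivAt_id t).const_mul (-k)).exp
    refine (((hexp.const_mul δ).const_add P).pow 2).congr_deriv ?_
    simp only [hm]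
    ring
  have hcontact : ∀ t ∈ Ico 0 T, ‖V t‖ ^ 2 = m t ^ 2 →
      2 * inner ℝ (V t) (V' t) < 2 * m t * (-k * (m t - P)) := by
    intro t ht heq
    have hnorm : ‖V t‖ = m t := (pow_left_inj₀ (norm_nonneg _) (hm_nonneg t) two_ne_zero).1 heq
    have := hradial t ht (hnorm ▸ hm_gt t)
    rw [hnorm] at this
    linarith
  have hfence := image_le_of_deriv_right_lt_deriv_boundary (hV.norm.pow 2)
    (fun t ht => (hV' t ht).norm_sq) (by simpa [hm] using pow_le_pow_left₀ (norm_nonneg _) h0 2)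
    hm_deriv hcontact
  exact fun t ht => (pow_le_pow_iff_left₀ (norm_nonneg _) (hm_nonneg t) two_ne_zero).1 (hfence ht)

theorem inner_lt_of_char_velocity {α β r A ε P : ℝ} (hε : 0 < ε) (hβ : 0 < β) (hr : 0 ≤ r)
    (hβr : β * r ^ 2 = α) (hrP : r ≤ P) (hroot : ε * A + (α - β * P ^ 2) * P = 0) {v w : E}
    (hchar : ‖w - ((1 / ε) * (α - β * ‖v‖ ^ 2)) • v‖ ≤ A) (hPv : P < ‖v‖) :
    inner ℝ v w < -(2 * β * r ^ 2 / ε) * ‖v‖ * (‖v‖ - P) := by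
  have hv : 0 < ‖v‖ := (hr.trans hrP).trans_lt hPv
  calc inner ℝ v w ≤ ‖v‖ * A + (1 / ε) * (α - β * ‖v‖ ^ 2) * ‖v‖ ^ 2 :=
        inner_le_of_norm_sub_smul_le hchar
    _ = ‖v‖ / ε * (ε * A + (α - β * ‖v‖ ^ 2) * ‖v‖) := by field_simp
    _ < ‖v‖ / ε * (-(2 * β * r ^ 2) * (‖v‖ - P)) :=
        mul_lt_mul_of_pos_left (cubic_lt_of_root hβ hr hβr hrP hPv hroot) (by positivity)
    _ = -(2 * β * r ^ 2 / ε) * ‖v‖ * (‖v‖ - P) := by ring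

end InnerProductSpace

theorem exp_neg_div_mul_div_mul_log {a ε L : ℝ} (ha : a ≠ 0) (hε : 0 < ε) (hL : 0 < L) :
    exp (-(a / ε) * (ε / a * log (L / ε))) = ε / L := by
  have hexponent : -(a / ε) * (ε / a * log (L / ε)) = -log (L / ε) := by
    field_simp
  rw [hexponent, exp_neg, exp_log (div_pos hL hε), inv_div]

theorem stmt15_general (d : ℕ) (α β A R₀ : ℝ) (hα : 0 < α) (hβ : 0 < β)
    (r : ℝ) (hr : r = Real.sqrt (α / β)) (hR₀ : r < R₀)
    (ρ₃ : ℝ → ℝ)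
    (hρ₃ : ∀ ε, 0 < ε →
      (r ≤ ρ₃ ε ∧ ε * A + (α - β * (ρ₃ ε) ^ 2) * ρ₃ ε = 0)) :
    ∃ ε₀ : ℝ, 0 < ε₀ ∧
      ∀ ε, 0 < ε → ε < ε₀ →
        ∀ V V' : ℝ → EuclideanSpace ℝ (Fin d),
          ContinuousOn V' (Set.Ici 0) →
          (∀ t ∈ Set.Ici (0:ℝ), HasDerivWithinAt V (V' t) (Set.Ici 0) t) →
          (∀ t ∈ Set.Ici (0:ℝ),
            ‖V' t - ((1 / ε) * (α - β * ‖V t‖ ^ 2)) • V t‖ ≤ A) →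
          ρ₃ ε + ε < ‖V 0‖ → ‖V 0‖ ≤ R₀ →
          ∃ t₂ : ℝ, 0 ≤ t₂ ∧
            t₂ ≤ ε / (2 * β * r ^ 2) * Real.log ((R₀ - r) / ε) ∧
            ‖V t₂‖ = ρ₃ ε + ε := by
  have hαβ : 0 < α / β := div_pos hα hβ
  have hr_pos : 0 < r := hr ▸ sqrt_pos.2 hαβ
  have hβr : β * r ^ 2 = α := by
    rw [hr, sq_sqrt hαβ.le]
    field_simp
  refine ⟨R₀ - r, sub_pos.2 hR₀, fun ε hε hεR V V' _ hV hchar h0lt h0le => ?_⟩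
  obtain ⟨hrP, hroot⟩ := hρ₃ ε hε
  set T := ε / (2 * β * r ^ 2) * log ((R₀ - r) / ε)
  have hT : 0 ≤ T := mul_nonneg (by positivity) (log_nonneg ((one_le_div hε).2 hεR.le))
  have hVcont : ContinuousOn V (Icc 0 T) :=
    fun t ht => ((hV t ht.1).continuousWithinAt).mono Icc_subset_Ici_self
  have hbarrier := norm_le_exp_barrier (δ := R₀ - ρ₃ ε) (hr_pos.le.trans hrP) (by linarith)
    hVcont (fun t ht => (hV t ht.1).mono (Ici_subset_Ici.2 ht.1))
    (fun t ht => inner_lt_of_char_velocity hε hβ hr_pos.le hβr hrP hroot (hchar t ht.1))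
    (by linarith) T (right_mem_Icc.2 hT)
  rw [exp_neg_div_mul_div_mul_log (by positivity) hε (by linarith)] at hbarrier
  have hVT : ‖V T‖ ≤ ρ₃ ε + ε :=
    calc ‖V T‖ ≤ ρ₃ ε + (R₀ - ρ₃ ε) * (ε / (R₀ - r)) := hbarrier
      _ ≤ ρ₃ ε + (R₀ - r) * (ε / (R₀ - r)) := by gcongr
      _ = ρ₃ ε + ε := by rw [mul_div_cancel₀ ε (sub_pos.2 hR₀).ne']
  obtain ⟨t₂, ⟨ht₂0, ht₂T⟩, ht₂⟩ := intermediate_value_Icc' hT hVcont.norm ⟨hVT, h0lt.le⟩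
  exact ⟨t₂, ht₂0, ht₂T, ht₂⟩

/-- Fix `α, β > 0`, `r = √(α/β)`, `A ≥ 0`, `R₀ > r`.
Suppose `ρ₃ ε` denotes, for each `ε > 0`, the unique zero in `[r,∞)` of
`ρ ↦ εA + (α − βρ²)ρ`. Then there exists `ε₀ > 0` such that for all
`0 < ε < ε₀`: any `(ε,A)`-characteristic velocity `V` with
`ρ₃ ε + ε < |V(0)| ≤ R₀` reaches the value `ρ₃ ε + ε` at some time
`t₂ ∈ [0, (ε/(2βr²)) ln((R₀ − r)/ε)]`. -/
theorem stmt15 (d : ℕ) (α β A R₀ : ℝ) (hα : 0 < α) (hβ : 0 < β) (hA : 0 ≤ A)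
    (r : ℝ) (hr : r = Real.sqrt (α / β)) (hR₀ : r < R₀)
    (ρ₃ : ℝ → ℝ)
    (hρ₃ : ∀ ε, 0 < ε →
      (r ≤ ρ₃ ε ∧ ε * A + (α - β * (ρ₃ ε) ^ 2) * ρ₃ ε = 0)) :
    ∃ ε₀ : ℝ, 0 < ε₀ ∧
      ∀ ε, 0 < ε → ε < ε₀ →
        ∀ V V' : ℝ → EuclideanSpace ℝ (Fin d),
          ContinuousOn V' (Set.Ici 0) →
          (∀ t ∈ Set.Ici (0:ℝ), HasDerivWithinAt V (V' t) (Set.Ici 0) t) →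
          (∀ t ∈ Set.Ici (0:ℝ),
            ‖V' t - ((1 / ε) * (α - β * ‖V t‖ ^ 2)) • V t‖ ≤ A) →
          ρ₃ ε + ε < ‖V 0‖ → ‖V 0‖ ≤ R₀ →
          ∃ t₂ : ℝ, 0 ≤ t₂ ∧
            t₂ ≤ ε / (2 * β * r ^ 2) * Real.log ((R₀ - r) / ε) ∧
            ‖V t₂‖ = ρ₃ ε + ε :=
  stmt15_general d α β A R₀ hα hβ r hr hR₀ ρ₃ hρ₃
end

section
/- Fix α, β > 0, set r = √(α/β), and let A ≥ 0, L₀ > 0. Let f_in be a Borel probability measure on ℝ^d × ℝ^d with supp f_in ⊆ {(x, v) : |x| ≤ L₀, |v| = r}. For each ε > 0 with εA < 2αr/(3√3), let a^ε : [0, ∞) × ℝ^d → ℝ^d be continuous, with bounded continuous spatial derivatives and ‖a^ε‖_{L∞} ≤ A, and let f^ε(t) be the pushforward of f_in under the flow (x, v) ↦ (X^ε, V^ε)(t; 0, x, v) of the system X′ = V, V′ = a^ε(t, X) + (1/ε)(α − β|V|²)V. Then there exists a constant C, depending only on α, β, A, r and not on ε, t, s, such that W₁(f^ε(t), f^ε(s))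 ≤ C|t − s| for all t, s ≥ 0 and all such ε. -/
open MeasureTheory Real Set Filter Topology

/-- The Monge–Kantorovich–Rubinstein distance `W₁` in dual form: the supremum
of `|∫ φ dμ − ∫ φ dν|` over functions `φ` with Lipschitz constant `≤ 1`. -/
noncomputable def W1dual {X : Type*} [PseudoMetricSpace X]
    [MeasurableSpace X] (μ ν : Measure X) : ℝ :=
  sSup {c | ∃ φ : X → ℝ, LipschitzWith 1 φ ∧
    c = |(∫ x, φ x ∂μ) - ∫ x, φ x ∂ν|}

/-!
Along a trajectory starting on `|v| = r`, the speed stays in a band: when `|V|² = r² ± m` the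
friction term `(1/ε)(α - β|V|²)|V|² = ∓ β m |V|² / ε` in `(|V|²)'/2` dominates the forcing
`|⟪V, a⟫| ≤ A |V|` as soon as `ε A < β m √(r² - m)`. A width `m` of order `ε`, capped at `2r²/3`,
satisfies this under the hypothesis `ε A < 2αr/(3√3)`, and it bounds the friction
coefficient by `2(A + 1)/r` uniformly in `ε`. Hence `|V'| ≤ 5A + 4` and `|X'| = |V| ≤ 2r`, and
coupling `f^ε(t)` with `f^ε(s)` through the flow bounds `W₁` by the speed bound times `|t - s|`.
-/

theorem image_le_of_hasDerivWithinAt_neg_of_eq {φ φ' : ℝ → ℝ} {a c : ℝ}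
    (hφ : ∀ t ∈ Ici a, HasDerivWithinAt φ (φ' t) (Ici a) t) (ha : φ a ≤ c)
    (hc : ∀ t ∈ Ici a, φ t = c → φ' t < 0) : ∀ t ∈ Ici a, φ t ≤ c := fun _ ht =>
  image_le_of_deriv_right_lt_deriv_boundary' (B' := 0)
    (fun x hx => (hφ x hx.1).continuousWithinAt.mono Icc_subset_Ici_self)
    (fun x hx => (hφ x hx.1).mono (Ici_subset_Ici.mpr hx.1)) ha continuousOn_const
    (fun _ _ => hasDerivWithinAt_const _ _ c) (fun x hx => hc x hx.1) (right_mem_Icc.mpr ht)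

theorem le_image_of_hasDerivWithinAt_pos_of_eq {φ φ' : ℝ → ℝ} {a c : ℝ}
    (hφ : ∀ t ∈ Ici a, HasDerivWithinAt φ (φ' t) (Ici a) t) (ha : c ≤ φ a)
    (hc : ∀ t ∈ Ici a, φ t = c → 0 < φ' t) : ∀ t ∈ Ici a, c ≤ φ t := by
  have := image_le_of_hasDerivWithinAt_neg_of_eq (fun t ht => (hφ t ht).neg) (neg_le_neg ha)
    fun t ht h => neg_neg_iff_pos.mpr (hc t ht (neg_inj.mp h))
  exact fun t ht => neg_le_neg_iff.mp (this t ht)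

-- Of order `ε`, so that the friction coefficient `β m / ε` stays bounded as `ε → 0`.
noncomputable def bandWidth (β A ε r : ℝ) : ℝ := min (2 * r ^ 2 / 3) (2 * (A + 1) * ε / (β * r))

section bandWidth

variable {β A ε r : ℝ}

theorem bandWidth_pos (hβ : 0 < β) (hA : 0 ≤ A) (hε : 0 < ε) (hr : 0 < r) :
    0 < bandWidth β A ε r :=
  lt_min (by positivity) (by positivity)

theorem bandWidth_le : bandWidth β A ε r ≤ 2 * r ^ 2 / 3 := min_le_left _ _

theorem mul_bandWidth_le (hβ : 0 < β) (hr : 0 < r) :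
    β * bandWidth β A ε r ≤ 2 * (A + 1) / r * ε := by
  calc β * bandWidth β A ε r ≤ β * (2 * (A + 1) * ε / (β * r)) := by
        gcongr; exact min_le_right _ _
    _ = 2 * (A + 1) / r * ε := by field_simp

-- The critical width `2 r² / 3` is where `m ↦ β m √(r² - m)` attains its maximum `2 α r / (3 √3)`.
theorem mul_lt_mul_bandWidth_mul_sqrt {α : ℝ} (hβ : 0 < β) (hA : 0 ≤ A) (hε : 0 < ε)
    (hr : 0 < r) (hβr : β * r ^ 2 = α) (hεA : ε * A < 2 * α * r / (3 * √3)) :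
    ε * A < β * bandWidth β A ε r * √(r ^ 2 - bandWidth β A ε r) := by
  set m := bandWidth β A ε r
  have hβm : 0 ≤ β * m := (mul_pos hβ (bandWidth_pos hβ hA hε hr)).le
  have h3 : √3 ^ 2 = 3 := sq_sqrt (by norm_num)
  have hsqrt : r / √3 ≤ √(r ^ 2 - m) := by
    apply le_sqrt_of_sq_le
    rw [div_pow, h3]
    linarith [bandWidth_le (β := β) (A := A) (ε := ε) (r := r)]
  rcases min_cases (2 * r ^ 2 / 3) (2 * (A + 1) * ε / (β * r)) with ⟨hm, -⟩ | ⟨hm, -⟩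
  · calc ε * A < 2 * α * r / (3 * √3) := hεA
      _ = β * m * (r / √3) := by rw [← hβr, show m = 2 * r ^ 2 / 3 from hm]; field_simp
      _ ≤ β * m * √(r ^ 2 - m) := mul_le_mul_of_nonneg_left hsqrt hβm
  · have hs3 : √3 < 2 := by rw [sqrt_lt' two_pos]; norm_num
    calc ε * A < 2 * (A + 1) * ε / √3 := by
          rw [lt_div_iff₀ (by positivity)]
          nlinarith [mul_le_mul_of_nonneg_left hs3.le (mul_nonneg hε.le hA)]
      _ = β * m * (r / √3) := by rw [show m = _ from hm]; field_simp
      _ ≤ β * m * √(r ^ 2 - m) := mul_le_mul_of_nonneg_left hsqrt hβm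

end bandWidth

section FrictionODE

variable {E : Type*} [NormedAddCommGroup E] [InnerProductSpace ℝ E]

theorem norm_sq_mem_Icc_of_hasDerivWithinAt {V b : ℝ → E} {α β A ε r m : ℝ} (hβ : 0 < β)
    (hε : 0 < ε) (hβr : β * r ^ 2 = α) (hm : 0 < m) (hεA : ε * A < β * m * √(r ^ 2 - m))
    (hb : ∀ t, ‖b t‖ ≤ A)
    (hV : ∀ t ∈ Ici (0:ℝ),
      HasDerivWithinAt V (b t + ((1 / ε) * (α - β * ‖V t‖ ^ 2)) • V t) (Ici 0) t)
    (hV0 : ‖V 0‖ = r) : ∀ t ∈ Ici (0:ℝ), ‖V t‖ ^ 2 ∈ Icc (r ^ 2 - m) (r ^ 2 + m) := by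
  have hderiv : ∀ t ∈ Ici (0:ℝ), HasDerivWithinAt (fun s => ‖V s‖ ^ 2)
      (2 * (inner ℝ (V t) (b t) + β * (r ^ 2 - ‖V t‖ ^ 2) * ‖V t‖ ^ 2 / ε)) (Ici 0) t := by
    intro t ht
    convert (hV t ht).norm_sq using 1
    rw [inner_add_right, real_inner_smul_right, real_inner_self_eq_norm_sq, ← hβr]
    ring
  have hA : 0 ≤ A := (norm_nonneg _).trans (hb 0)
  refine fun t ht => ⟨le_image_of_hasDerivWithinAt_pos_of_eq hderiv (by rw [hV0]; linarith)
    (fun t _ hVt => ?_) t ht, image_le_of_hasDerivWithinAt_neg_of_eq hderiv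
    (by rw [hV0]; linarith) (fun t _ hVt => ?_) t ht⟩
  · have hinner : -(‖V t‖ * A) ≤ inner ℝ (V t) (b t) :=
      (neg_le_neg (mul_le_mul_of_nonneg_left (hb t) (norm_nonneg _))).trans
        (neg_le_of_abs_le (abs_real_inner_le_norm _ _))
    have hs : ‖V t‖ = √(r ^ 2 - m) := by rw [← hVt, sqrt_sq (norm_nonneg _)]
    have hpos : 0 < ‖V t‖ := by
      by_contra! h0
      rw [hs] at h0
      nlinarith [mul_nonneg hε.le hA, mul_nonpos_of_nonneg_of_nonpos (mul_pos hβ hm).le h0]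
    have key : ‖V t‖ * A < β * m * ‖V t‖ ^ 2 / ε := by
      rw [lt_div_iff₀ hε]
      nlinarith [mul_lt_mul_of_pos_left (hs ▸ hεA) hpos]
    have e : β * (r ^ 2 - ‖V t‖ ^ 2) * ‖V t‖ ^ 2 / ε = β * m * ‖V t‖ ^ 2 / ε := by
      rw [hVt]; ring
    linarith
  · have hinner : inner ℝ (V t) (b t) ≤ ‖V t‖ * A :=
      (real_inner_le_norm _ _).trans (mul_le_mul_of_nonneg_left (hb t) (norm_nonneg _))
    have hs : √(r ^ 2 - m) ≤ ‖V t‖ := by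
      rw [← sqrt_sq (norm_nonneg (V t)), hVt]; gcongr; linarith
    have hpos : 0 < ‖V t‖ := by
      rw [← sqrt_sq (norm_nonneg (V t)), hVt]; positivity
    have key : ‖V t‖ * A < β * m * ‖V t‖ ^ 2 / ε := by
      have := hεA.trans_le (mul_le_mul_of_nonneg_left hs (mul_pos hβ hm).le)
      rw [lt_div_iff₀ hε]
      nlinarith [mul_lt_mul_of_pos_left this hpos]
    have e : β * (r ^ 2 - ‖V t‖ ^ 2) * ‖V t‖ ^ 2 / ε = -(β * m * ‖V t‖ ^ 2 / ε) := by
      rw [hVt]; ring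
    linarith

variable {α β A ε r : ℝ}

theorem norm_le_and_abs_friction_le {V b : ℝ → E} (hβ : 0 < β) (hA : 0 ≤ A)
    (hε : 0 < ε) (hr : 0 < r) (hβr : β * r ^ 2 = α) (hεA : ε * A < 2 * α * r / (3 * √3))
    (hb : ∀ t, ‖b t‖ ≤ A)
    (hV : ∀ t ∈ Ici (0:ℝ),
      HasDerivWithinAt V (b t + ((1 / ε) * (α - β * ‖V t‖ ^ 2)) • V t) (Ici 0) t)
    (hV0 : ‖V 0‖ = r) (t : ℝ) (ht : t ∈ Ici (0:ℝ)) :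
    ‖V t‖ ≤ 2 * r ∧ |(1 / ε) * (α - β * ‖V t‖ ^ 2)| ≤ 2 * (A + 1) / r := by
  obtain ⟨hlo, hhi⟩ := norm_sq_mem_Icc_of_hasDerivWithinAt hβ hε hβr
    (bandWidth_pos hβ hA hε hr) (mul_lt_mul_bandWidth_mul_sqrt hβ hA hε hr hβr hεA) hb hV hV0 t ht
  have hm := bandWidth_le (β := β) (A := A) (ε := ε) (r := r)
  refine ⟨(pow_le_pow_iff_left₀ (norm_nonneg _) (by positivity) two_ne_zero).mp ?_, ?_⟩
  · linarith
  · rw [abs_mul, abs_of_pos (one_div_pos.mpr hε), one_div_mul_eq_div, div_le_iff₀ hε, abs_le]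
    have := mul_bandWidth_le (A := A) (ε := ε) hβ hr
    constructor <;> nlinarith

theorem norm_sub_le_of_hasDerivWithinAt {Y : ℝ → E × E} {b : ℝ → E} (hβ : 0 < β)
    (hA : 0 ≤ A) (hε : 0 < ε) (hr : 0 < r) (hβr : β * r ^ 2 = α)
    (hεA : ε * A < 2 * α * r / (3 * √3)) (hb : ∀ t, ‖b t‖ ≤ A)
    (hY : ∀ t ∈ Ici (0:ℝ), HasDerivWithinAt Y
      ((Y t).2, b t + ((1 / ε) * (α - β * ‖(Y t).2‖ ^ 2)) • (Y t).2) (Ici 0) t)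
    (hY0 : ‖(Y 0).2‖ = r) {s t : ℝ} (hs : s ∈ Ici (0:ℝ)) (ht : t ∈ Ici (0:ℝ)) :
    ‖Y t - Y s‖ ≤ (2 * r + 5 * A + 4) * |t - s| := by
  have hV : ∀ t ∈ Ici (0:ℝ), HasDerivWithinAt (fun t => (Y t).2)
      (b t + ((1 / ε) * (α - β * ‖(Y t).2‖ ^ 2)) • (Y t).2) (Ici 0) t :=
    fun t ht => (hY t ht).snd
  refine (convex_Ici 0).norm_image_sub_le_of_norm_hasDerivWithin_le hY (fun τ hτ => ?_) hs ht
  obtain ⟨hVτ, hfric⟩ :=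
    norm_le_and_abs_friction_le hβ hA hε hr hβr hεA hb hV hY0 τ hτ
  have hacc : ‖b τ + ((1 / ε) * (α - β * ‖(Y τ).2‖ ^ 2)) • (Y τ).2‖ ≤ 5 * A + 4 :=
    calc _ ≤ A + 2 * (A + 1) / r * (2 * r) := by
          refine (norm_add_le _ _).trans (add_le_add (hb τ) ?_)
          rw [norm_smul, Real.norm_eq_abs]
          exact mul_le_mul hfric hVτ (norm_nonneg _) (by positivity)
      _ = 5 * A + 4 := by field_simp; ring
  rw [Prod.norm_def]
  exact max_le (hVτ.trans (by linarith)) (hacc.trans (by linarith))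

end FrictionODE

section W1dual

variable {Ω X : Type*} [MeasurableSpace Ω] [PseudoMetricSpace X] [MeasurableSpace X]

theorem W1dual_comm (μ ν : Measure X) : W1dual μ ν = W1dual ν μ := by
  simp only [W1dual, abs_sub_comm]

-- Unless `μ = 0`, the set `{|∫ φ dμ|}` is unbounded (take `φ` constant) and `sSup` returns `0`.
theorem W1dual_zero_right (μ : Measure X) [IsFiniteMeasure μ] : W1dual μ 0 = 0 := by
  rcases eq_zero_or_neZero μ with rfl | hμ
  · refine le_antisymm (Real.sSup_le ?_ le_rfl) (Real.sSup_nonneg ?_) <;>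
      rintro _ ⟨φ, -, rfl⟩ <;> simp
  · refine Real.sSup_of_not_bddAbove fun ⟨b, hb⟩ => ?_
    have hμ : 0 < μ.real univ := measureReal_univ_pos
    have := hb ⟨fun _ => (|b| + 1) / μ.real univ, LipschitzWith.const' _, rfl⟩
    rw [integral_zero_measure, sub_zero, integral_const, smul_eq_mul, mul_div_cancel₀ _ hμ.ne',
      abs_of_pos (by positivity)] at this
    linarith [le_abs_self b]

-- `u` and `v` are integrable or not together; in the second case both integrals are `0`.
theorem abs_integral_sub_integral_le {μ : Measure Ω} [IsProbabilityMeasure μ] {u v : Ω → ℝ}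
    {c : ℝ} (hu : AEStronglyMeasurable u μ) (hv : AEStronglyMeasurable v μ)
    (h : ∀ᵐ ω ∂μ, |u ω - v ω| ≤ c) : |∫ ω, u ω ∂μ - ∫ ω, v ω ∂μ| ≤ c := by
  have hc : 0 ≤ c := let ⟨_, hω⟩ := h.exists; (abs_nonneg _).trans hω
  have hdiff : Integrable (u - v) μ := Integrable.of_bound (hu.sub hv) c h
  by_cases hui : Integrable u μ
  · rw [← integral_sub hui (hui.sub hdiff |>.congr (by simp))]
    simpa using norm_integral_le_of_norm_le_const (μ := μ) (f := u - v) h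
  · have hvi : ¬Integrable v μ := fun hvi => hui ((hvi.add hdiff).congr (by simp))
    simpa [integral_undef hui, integral_undef hvi] using hc

variable [OpensMeasurableSpace X]

theorem W1dual_map_le_of_ae_dist_le (μ : Measure Ω) [IsProbabilityMeasure μ] {f g : Ω → X}
    {c : ℝ} (h : ∀ᵐ ω ∂μ, dist (f ω) (g ω) ≤ c) : W1dual (μ.map f) (μ.map g) ≤ c := by
  have hc : 0 ≤ c := let ⟨_, hω⟩ := h.exists; dist_nonneg.trans hω
  by_cases hf : AEMeasurable f μ
  · by_cases hg : AEMeasurable g μ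
    · refine Real.sSup_le ?_ hc
      rintro _ ⟨φ, hφ, rfl⟩
      rw [integral_map hf hφ.continuous.aestronglyMeasurable,
        integral_map hg hφ.continuous.aestronglyMeasurable]
      refine abs_integral_sub_integral_le
        (hφ.continuous.measurable.comp_aemeasurable hf).aestronglyMeasurable
        (hφ.continuous.measurable.comp_aemeasurable hg).aestronglyMeasurable ?_
      filter_upwards [h] with ω hω
      simpa [← Real.dist_eq] using (hφ.dist_le_mul _ _).trans (by simpa using hω)
    · have := Measure.isProbabilityMeasure_map hf
      rw [Measure.map_of_not_aemeasurable hg, W1dual_zero_right]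
      exact hc
  · rw [Measure.map_of_not_aemeasurable hf, W1dual_comm, W1dual_zero_right]
    exact hc

end W1dual

theorem stmt16_general (d : ℕ) (α β A L₀ : ℝ) (hα : 0 < α) (hβ : 0 < β) (hA : 0 ≤ A)
    (r : ℝ) (hr : r = Real.sqrt (α / β))
    (fin : Measure (EuclideanSpace ℝ (Fin d) × EuclideanSpace ℝ (Fin d)))
    [IsProbabilityMeasure fin]
    (hsupp : fin ({p | ‖p.1‖ ≤ L₀ ∧ ‖p.2‖ = r}ᶜ) = 0)
    (a : ℝ → ℝ → EuclideanSpace ℝ (Fin d) → EuclideanSpace ℝ (Fin d))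
    (Z : ℝ → ℝ → EuclideanSpace ℝ (Fin d) × EuclideanSpace ℝ (Fin d) →
      EuclideanSpace ℝ (Fin d) × EuclideanSpace ℝ (Fin d))
    (ha : ∀ ε, 0 < ε → ε * A < 2 * α * r / (3 * Real.sqrt 3) →
      (Continuous fun q : ℝ × EuclideanSpace ℝ (Fin d) => a ε q.1 q.2) ∧
      (∀ t, ContDiff ℝ 1 (a ε t)) ∧
      (∃ C₁, ∀ t x, ‖fderiv ℝ (a ε t) x‖ ≤ C₁) ∧
      (∀ t x, ‖a ε t x‖ ≤ A))
    (hZ0 : ∀ ε, 0 < ε → ε * A < 2 * α * r / (3 * Real.sqrt 3) →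
      ∀ p, Z ε 0 p = p)
    (hZode : ∀ ε, 0 < ε → ε * A < 2 * α * r / (3 * Real.sqrt 3) →
      ∀ p, ∀ t ∈ Set.Ici (0:ℝ),
        HasDerivWithinAt (fun s => Z ε s p)
          ((Z ε t p).2,
            a ε t (Z ε t p).1 +
              ((1 / ε) * (α - β * ‖(Z ε t p).2‖ ^ 2)) • (Z ε t p).2)
          (Set.Ici 0) t) :
    ∃ C : ℝ, ∀ ε, 0 < ε → ε * A < 2 * α * r / (3 * Real.sqrt 3) →
      ∀ t ∈ Set.Ici (0:ℝ), ∀ s ∈ Set.Ici (0:ℝ),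
        W1dual (fin.map (Z ε t)) (fin.map (Z ε s)) ≤ C * |t - s| := by
  have hr0 : 0 < r := hr ▸ sqrt_pos.mpr (div_pos hα hβ)
  have hβr : β * r ^ 2 = α := by rw [hr, sq_sqrt (div_pos hα hβ).le]; field_simp
  have hspeed : ∀ᵐ p ∂fin, ‖p.2‖ = r :=
    measure_mono_null (fun p hp => fun h => hp h.2) hsupp
  refine ⟨2 * r + 5 * A + 4, fun ε hε hεA t ht s hs => W1dual_map_le_of_ae_dist_le fin ?_⟩
  filter_upwards [hspeed] with p hp
  rw [dist_eq_norm]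
  exact norm_sub_le_of_hasDerivWithinAt hβ hA hε hr0 hβr hεA (fun τ => (ha ε hε hεA).2.2.2 τ _)
    (hZode ε hε hεA p) (by rw [hZ0 ε hε hεA p]; exact hp) hs ht

/-- Fix `α, β > 0`, `r = √(α/β)`, `A ≥ 0`, `L₀ > 0`. Let
`f_in` be a Borel probability measure supported in `{|x| ≤ L₀, |v| = r}`. For
each `ε > 0` with `εA < 2αr/(3√3)`, given a continuous field `a^ε` with
bounded continuous spatial derivatives and `‖a^ε‖_∞ ≤ A`, let `f^ε(t)` be the
pushforward of `f_in` under the time-`t` flow `Z ε t` of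
`X′ = V, V′ = a^ε(t,X) + (1/ε)(α − β|V|²)V`. Then there is a constant `C`
(independent of `ε, t, s`) with `W₁(f^ε(t), f^ε(s)) ≤ C|t − s|` for all
`t, s ≥ 0` and all such `ε`. -/
theorem stmt16 (d : ℕ) (α β A L₀ : ℝ) (hα : 0 < α) (hβ : 0 < β) (hA : 0 ≤ A)
    (hL₀ : 0 < L₀) (r : ℝ) (hr : r = Real.sqrt (α / β))
    (fin : Measure (EuclideanSpace ℝ (Fin d) × EuclideanSpace ℝ (Fin d)))
    [IsProbabilityMeasure fin]
    (hsupp : fin ({p | ‖p.1‖ ≤ L₀ ∧ ‖p.2‖ = r}ᶜ) = 0)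
    (a : ℝ → ℝ → EuclideanSpace ℝ (Fin d) → EuclideanSpace ℝ (Fin d))
    (Z : ℝ → ℝ → EuclideanSpace ℝ (Fin d) × EuclideanSpace ℝ (Fin d) →
      EuclideanSpace ℝ (Fin d) × EuclideanSpace ℝ (Fin d))
    (ha : ∀ ε, 0 < ε → ε * A < 2 * α * r / (3 * Real.sqrt 3) →
      (Continuous fun q : ℝ × EuclideanSpace ℝ (Fin d) => a ε q.1 q.2) ∧
      (∀ t, ContDiff ℝ 1 (a ε t)) ∧
      (∃ C₁, ∀ t x, ‖fderiv ℝ (a ε t) x‖ ≤ C₁) ∧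
      (∀ t x, ‖a ε t x‖ ≤ A))
    (hZ0 : ∀ ε, 0 < ε → ε * A < 2 * α * r / (3 * Real.sqrt 3) →
      ∀ p, Z ε 0 p = p)
    (hZode : ∀ ε, 0 < ε → ε * A < 2 * α * r / (3 * Real.sqrt 3) →
      ∀ p, ∀ t ∈ Set.Ici (0:ℝ),
        HasDerivWithinAt (fun s => Z ε s p)
          ((Z ε t p).2,
            a ε t (Z ε t p).1 +
              ((1 / ε) * (α - β * ‖(Z ε t p).2‖ ^ 2)) • (Z ε t p).2)
          (Set.Ici 0) t) :
    ∃ C : ℝ, ∀ ε, 0 < ε → ε * A < 2 * α * r / (3 * Real.sqrt 3) →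
      ∀ t ∈ Set.Ici (0:ℝ), ∀ s ∈ Set.Ici (0:ℝ),
        W1dual (fin.map (Z ε t)) (fin.map (Z ε s)) ≤ C * |t - s| :=
  stmt16_general d α β A L₀ hα hβ hA r hr fin hsupp a Z ha hZ0 hZode
end

section
/- Let U ∈ C²_b(ℝ^d) and h ∈ C¹_b(ℝ^d), and for a Borel probability measure f on ℝ^d × ℝ^d define a_f(x, v) = −∫ ∇U(x − x′) df(x′, v′) − ∫ h(x − x′)(v − v′) df(x′, v′). Let f, g be Borel probability measures on ℝ^d × ℝ^d supported in {(x, v) : |x| ≤ L, |v| ≤ R} for some L, R > 0. Then for every coupling π of f and g (i.e. every Borel probability measure on (ℝ^d × ℝ^d)² whose first and second marginals are f and g respectively), sup{|a_f(x, v) − a_g(x, v)| : x ∈ ℝ^d, |v| ≤ R} ≤ ( ‖∇²_x U‖_{L∞} + (‖h‖_{L∞}² + 4R²‖∇_x h‖_{L∞}²)^{1/2} ) ∫ |(x′, v′) − (x″, v″)| dπ((x′, v′), (x″, v″)). In particular, a_f − a_g is bounded on ℝ^d × B_R by the same constant times W₁(f, g). -/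
/-!
Write `a_f(x, v) = -∫ K(q) df(q)` with the interaction kernel
`K(x', v') = ∇U(x - x') + h(x - x') (v - v')`. For a coupling `γ` of `f` and `g`, the difference
`a_f - a_g` is the `γ`-integral of `K(q'') - K(q')`, so it suffices to bound the kernel
pointwise by a Lipschitz constant times `|q' - q''|`. The gradient term contributes
`‖∇²U‖ |x' - x''|`; splitting the friction term as
`(h(x - x') - h(x - x'')) (v - v') + h(x - x'') (v'' - v')` gives
`2R ‖∇h‖ |x' - x''| + ‖h‖ |v' - v''|`, and Cauchy–Schwarz turns this into
`(‖h‖² + 4R²‖∇h‖²)^{1/2} |q' - q''|`. Taking the infimum over couplings gives the `W₁` bound.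
-/

open MeasureTheory Real Set

/-- The interaction acceleration field
`a_f(x, v) = −∫ ∇U(x − x′) df(x′, v′) − ∫ h(x − x′)(v − v′) df(x′, v′)`. -/
noncomputable def accelField {d : ℕ} (U h : EuclideanSpace ℝ (Fin d) → ℝ)
    (f : Measure (EuclideanSpace ℝ (Fin d) × EuclideanSpace ℝ (Fin d)))
    (x v : EuclideanSpace ℝ (Fin d)) : EuclideanSpace ℝ (Fin d) :=
  -∫ q, (gradient U (x - q.1) + h (x - q.1) • (v - q.2)) ∂f

/-- Euclidean transportation cost on pairs of phase-space points,
`|(x′,v′) − (x″,v″)| = √(|x′−x″|² + |v′−v″|²)`. -/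
noncomputable def phaseCost {d : ℕ}
    (q : (EuclideanSpace ℝ (Fin d) × EuclideanSpace ℝ (Fin d)) ×
         (EuclideanSpace ℝ (Fin d) × EuclideanSpace ℝ (Fin d))) : ℝ :=
  Real.sqrt (‖q.1.1 - q.2.1‖ ^ 2 + ‖q.1.2 - q.2.2‖ ^ 2)

/-- The Monge–Kantorovich–Rubinstein distance `W₁`, realized as the infimum
over couplings of the integrated transportation cost. -/
noncomputable def W1coupling {d : ℕ}
    (f g : Measure (EuclideanSpace ℝ (Fin d) × EuclideanSpace ℝ (Fin d))) : ℝ :=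
  sInf {c | ∃ plan : Measure ((EuclideanSpace ℝ (Fin d) × EuclideanSpace ℝ (Fin d)) ×
      (EuclideanSpace ℝ (Fin d) × EuclideanSpace ℝ (Fin d))),
    IsProbabilityMeasure plan ∧ plan.map Prod.fst = f ∧ plan.map Prod.snd = g ∧
    c = ∫ q, phaseCost q ∂plan}

open InnerProductSpace

section Gradient

variable {E : Type*} [NormedAddCommGroup E] [InnerProductSpace ℝ E] [CompleteSpace E]

lemma ContDiff.differentiable_gradient {U : E → ℝ} (hU : ContDiff ℝ 2 U) :
    Differentiable ℝ (gradient U) :=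
  (toDual ℝ E).symm.differentiable.comp
    ((hU.fderiv_right (m := 1) (by norm_num)).differentiable one_ne_zero)

lemma norm_gradient_sub_le {U : E → ℝ} (hU : ContDiff ℝ 2 U) {C : ℝ}
    (hC : ∀ x, ‖fderiv ℝ (gradient U) x‖ ≤ C) (a b : E) :
    ‖gradient U a - gradient U b‖ ≤ C * ‖a - b‖ :=
  convex_univ.norm_image_sub_le_of_norm_fderiv_le (fun x _ => hU.differentiable_gradient x)
    (fun x _ => hC x) (mem_univ b) (mem_univ a)

lemma norm_sub_le_of_norm_gradient_le {h : E → ℝ} (hh : Differentiable ℝ h) {C : ℝ}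
    (hC : ∀ x, ‖gradient h x‖ ≤ C) (a b : E) :
    ‖h a - h b‖ ≤ C * ‖a - b‖ := by
  have hC' : ∀ x, ‖fderiv ℝ h x‖ ≤ C := fun x => by
    rw [← toDual_gradient, LinearIsometryEquiv.norm_map]
    exact hC x
  exact convex_univ.norm_image_sub_le_of_norm_fderiv_le (fun x _ => hh x) (fun x _ => hC' x)
    (mem_univ b) (mem_univ a)

end Gradient

section Coupling

variable {α : Type*} [MeasurableSpace α]

lemma MeasureTheory.Measure.ae_mem_prod_of_map_eq {β : Type*} [MeasurableSpace β]
    {γ : Measure (α × β)} {μ : Measure α} {ν : Measure β} {s : Set α} {t : Set β}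
    (h1 : γ.map Prod.fst = μ) (h2 : γ.map Prod.snd = ν) (hs : μ sᶜ = 0) (ht : ν tᶜ = 0) :
    ∀ᵐ q ∂γ, q ∈ s ×ˢ t := by
  subst h1 h2
  filter_upwards [ae_of_ae_map measurable_fst.aemeasurable (mem_ae_iff.2 hs),
    ae_of_ae_map measurable_snd.aemeasurable (mem_ae_iff.2 ht)] with q hq1 hq2 using ⟨hq1, hq2⟩

lemma Continuous.integrable_of_ae_mem_isCompact [TopologicalSpace α] [T2Space α]
    [OpensMeasurableSpace α] {F : Type*} [NormedAddCommGroup F] {μ : Measure α}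
    [IsFiniteMeasure μ] {φ : α → F} (hφ : Continuous φ) {K : Set α} (hK : IsCompact K)
    (hμ : ∀ᵐ x ∂μ, x ∈ K) : Integrable φ μ := by
  have hφK : IntegrableOn φ K μ := hφ.continuousOn.integrableOn_compact hK
  rwa [IntegrableOn, Measure.restrict_eq_self_of_ae_mem hμ] at hφK

lemma norm_integral_sub_integral_le_of_coupling {F : Type*} [NormedAddCommGroup F]
    [NormedSpace ℝ F] {μ ν : Measure α} {γ : Measure (α × α)}
    (h1 : γ.map Prod.fst = μ) (h2 : γ.map Prod.snd = ν) {φ : α → F}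
    (hμ : Integrable φ μ) (hν : Integrable φ ν) {c : α × α → ℝ} (hc : Integrable c γ)
    (hle : ∀ᵐ q ∂γ, ‖φ q.1 - φ q.2‖ ≤ c q) :
    ‖∫ x, φ x ∂μ - ∫ x, φ x ∂ν‖ ≤ ∫ q, c q ∂γ := by
  subst h1 h2
  have hφ1 : Integrable (fun q => φ q.1) γ := hμ.comp_measurable measurable_fst
  have hφ2 : Integrable (fun q => φ q.2) γ := hν.comp_measurable measurable_snd
  rw [integral_map measurable_fst.aemeasurable hμ.aestronglyMeasurable,
    integral_map measurable_snd.aemeasurable hν.aestronglyMeasurable, ← integral_sub hφ1 hφ2]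
  exact (norm_integral_le_integral_norm _).trans (integral_mono_ae (hφ1.sub hφ2).norm hc hle)

end Coupling

lemma isCompact_setOf_norm_fst_le_and_norm_snd_le {E F : Type*} [NormedAddCommGroup E]
    [NormedAddCommGroup F] [ProperSpace E] [ProperSpace F] (L R : ℝ) :
    IsCompact {p : E × F | ‖p.1‖ ≤ L ∧ ‖p.2‖ ≤ R} := by
  convert (isCompact_closedBall (0 : E) L).prod (isCompact_closedBall (0 : F) R) using 1
  ext p
  simp

lemma le_mul_W1coupling {d : ℕ}
    {f g : Measure (EuclideanSpace ℝ (Fin d) × EuclideanSpace ℝ (Fin d))}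
    [IsProbabilityMeasure f] [IsProbabilityMeasure g] {A K : ℝ} (hK : 0 ≤ K)
    (hA : ∀ plan : Measure ((EuclideanSpace ℝ (Fin d) × EuclideanSpace ℝ (Fin d)) ×
        (EuclideanSpace ℝ (Fin d) × EuclideanSpace ℝ (Fin d))),
      IsProbabilityMeasure plan → plan.map Prod.fst = f → plan.map Prod.snd = g →
      A ≤ K * ∫ q, phaseCost q ∂plan) :
    A ≤ K * W1coupling f g := by
  rw [W1coupling, ← smul_eq_mul, ← Real.sInf_smul_of_nonneg hK]
  refine le_csInf ⟨_, ⟨_, ⟨f.prod g, inferInstance, by simp, by simp, rfl⟩, rfl⟩⟩ ?_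
  rintro _ ⟨_, ⟨plan, hplan, h1, h2, rfl⟩, rfl⟩
  exact hA plan hplan h1 h2

section Kernel

variable {E : Type*} [NormedAddCommGroup E] [InnerProductSpace ℝ E] [CompleteSpace E]

noncomputable def interactionKernel (U h : E → ℝ) (x v : E) (q : E × E) : E :=
  gradient U (x - q.1) + h (x - q.1) • (v - q.2)

lemma continuous_interactionKernel {U h : E → ℝ} (hU : ContDiff ℝ 2 U) (hh : Continuous h)
    (x v : E) : Continuous (interactionKernel U h x v) := by
  unfold interactionKernel
  have := hU.differentiable_gradient.continuous
  fun_prop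

lemma norm_interactionKernel_sub_le {U h : E → ℝ} (hU : ContDiff ℝ 2 U)
    (hh : Differentiable ℝ h) {CU2 Ch Ch1 ρ : ℝ} (hU2b : ∀ x, ‖fderiv ℝ (gradient U) x‖ ≤ CU2)
    (hhb : ∀ x, |h x| ≤ Ch) (hh1b : ∀ x, ‖gradient h x‖ ≤ Ch1) {x v : E} {p p' : E × E}
    (hv : ‖v - p.2‖ ≤ ρ) :
    ‖interactionKernel U h x v p - interactionKernel U h x v p'‖ ≤
      (CU2 + √(Ch ^ 2 + ρ ^ 2 * Ch1 ^ 2)) * √(‖p.1 - p'.1‖ ^ 2 + ‖p.2 - p'.2‖ ^ 2) := by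
  set a := ‖p.1 - p'.1‖
  set b := ‖p.2 - p'.2‖
  have hCU2 : 0 ≤ CU2 := (norm_nonneg _).trans (hU2b 0)
  have hCh1 : 0 ≤ Ch1 := (norm_nonneg _).trans (hh1b 0)
  have hshift : ‖(x - p.1) - (x - p'.1)‖ = a := by rw [sub_sub_sub_cancel_left, norm_sub_rev]
  have hgrad : ‖gradient U (x - p.1) - gradient U (x - p'.1)‖ ≤ CU2 * a :=
    hshift ▸ norm_gradient_sub_le hU hU2b _ _
  have hfric : ‖h (x - p.1) • (v - p.2) - h (x - p'.1) • (v - p'.2)‖ ≤ ρ * Ch1 * a + Ch * b := by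
    have hsplit : h (x - p.1) • (v - p.2) - h (x - p'.1) • (v - p'.2) =
        (h (x - p.1) - h (x - p'.1)) • (v - p.2) - h (x - p'.1) • (p.2 - p'.2) := by
      simp only [smul_sub, sub_smul]
      abel
    have hdiff : ‖h (x - p.1) - h (x - p'.1)‖ ≤ Ch1 * a :=
      hshift ▸ norm_sub_le_of_norm_gradient_le hh hh1b _ _
    rw [hsplit]
    refine (norm_sub_le _ _).trans ?_
    have hbound : ‖h (x - p'.1)‖ ≤ Ch := hhb _
    rw [norm_smul, norm_smul]
    exact add_le_add
      ((mul_le_mul hdiff hv (norm_nonneg _) (mul_nonneg hCh1 (norm_nonneg _))).trans_eq (by ring))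
      (mul_le_mul_of_nonneg_right hbound (norm_nonneg _))
  have ha : a ≤ √(a ^ 2 + b ^ 2) := le_sqrt_of_sq_le (by nlinarith)
  have hCauchySchwarz : ρ * Ch1 * a + Ch * b ≤ √(Ch ^ 2 + ρ ^ 2 * Ch1 ^ 2) * √(a ^ 2 + b ^ 2) := by
    rw [← sqrt_mul (by positivity)]
    exact le_sqrt_of_sq_le (by nlinarith [sq_nonneg (Ch * a - ρ * Ch1 * b)])
  calc ‖interactionKernel U h x v p - interactionKernel U h x v p'‖
      ≤ ‖gradient U (x - p.1) - gradient U (x - p'.1)‖ +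
          ‖h (x - p.1) • (v - p.2) - h (x - p'.1) • (v - p'.2)‖ := by
        rw [interactionKernel, interactionKernel, add_sub_add_comm]
        exact norm_add_le _ _
    _ ≤ CU2 * a + (ρ * Ch1 * a + Ch * b) := add_le_add hgrad hfric
    _ ≤ CU2 * √(a ^ 2 + b ^ 2) + √(Ch ^ 2 + ρ ^ 2 * Ch1 ^ 2) * √(a ^ 2 + b ^ 2) :=
        add_le_add (mul_le_mul_of_nonneg_left ha hCU2) hCauchySchwarz
    _ = _ := by ring

end Kernel

lemma continuous_phaseCost {d : ℕ} : Continuous (phaseCost (d := d)) := by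
  unfold phaseCost
  fun_prop

theorem norm_accelField_sub_le_of_coupling {d : ℕ} {L R : ℝ}
    {U h : EuclideanSpace ℝ (Fin d) → ℝ} (hU : ContDiff ℝ 2 U) (hh : Differentiable ℝ h)
    {CU2 Ch Ch1 : ℝ} (hU2b : ∀ x, ‖fderiv ℝ (gradient U) x‖ ≤ CU2) (hhb : ∀ x, |h x| ≤ Ch)
    (hh1b : ∀ x, ‖gradient h x‖ ≤ Ch1)
    {f g : Measure (EuclideanSpace ℝ (Fin d) × EuclideanSpace ℝ (Fin d))}
    (hfsupp : f ({p | ‖p.1‖ ≤ L ∧ ‖p.2‖ ≤ R}ᶜ) = 0)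
    (hgsupp : g ({p | ‖p.1‖ ≤ L ∧ ‖p.2‖ ≤ R}ᶜ) = 0)
    {γ : Measure ((EuclideanSpace ℝ (Fin d) × EuclideanSpace ℝ (Fin d)) ×
        (EuclideanSpace ℝ (Fin d) × EuclideanSpace ℝ (Fin d)))} [IsFiniteMeasure γ]
    (h1 : γ.map Prod.fst = f) (h2 : γ.map Prod.snd = g)
    {x v : EuclideanSpace ℝ (Fin d)} (hv : ‖v‖ ≤ R) :
    ‖accelField U h f x v - accelField U h g x v‖ ≤
      (CU2 + √(Ch ^ 2 + 4 * R ^ 2 * Ch1 ^ 2)) * ∫ q, phaseCost q ∂γ := by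
  set S := {p : EuclideanSpace ℝ (Fin d) × EuclideanSpace ℝ (Fin d) | ‖p.1‖ ≤ L ∧ ‖p.2‖ ≤ R}
  have hS : IsCompact S := isCompact_setOf_norm_fst_le_and_norm_snd_le L R
  have hγS : ∀ᵐ q ∂γ, q ∈ S ×ˢ S := Measure.ae_mem_prod_of_map_eq h1 h2 hfsupp hgsupp
  have hK := continuous_interactionKernel hU hh.continuous x v
  have hKf : Integrable (interactionKernel U h x v) f := by
    subst h1
    exact hK.integrable_of_ae_mem_isCompact hS (mem_ae_iff.2 hfsupp)
  have hKg : Integrable (interactionKernel U h x v) g := by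
    subst h2
    exact hK.integrable_of_ae_mem_isCompact hS (mem_ae_iff.2 hgsupp)
  have hcost : Integrable (phaseCost (d := d)) γ :=
    continuous_phaseCost.integrable_of_ae_mem_isCompact (hS.prod hS) hγS
  have hρ : (2 * R) ^ 2 * Ch1 ^ 2 = 4 * R ^ 2 * Ch1 ^ 2 := by ring
  have hdiff : accelField U h f x v - accelField U h g x v =
      ∫ q, interactionKernel U h x v q ∂g - ∫ q, interactionKernel U h x v q ∂f :=
    neg_sub_neg _ _
  rw [hdiff, norm_sub_rev, ← hρ, ← integral_const_mul]
  refine norm_integral_sub_integral_le_of_coupling h1 h2 hKf hKg (hcost.const_mul _) ?_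
  filter_upwards [hγS] with q hq
  exact norm_interactionKernel_sub_le hU hh hU2b hhb hh1b
    ((norm_sub_le _ _).trans (by linarith [hq.1.2]))

theorem stmt17_general (d : ℕ) (L R : ℝ)
    (U h : EuclideanSpace ℝ (Fin d) → ℝ)
    (hU : ContDiff ℝ 2 U) (hh : ContDiff ℝ 1 h)
    (CU2 Ch Ch1 : ℝ)
    (hU2b : ∀ x, ‖fderiv ℝ (fun y => gradient U y) x‖ ≤ CU2)
    (hhb : ∀ x, |h x| ≤ Ch) (hh1b : ∀ x, ‖gradient h x‖ ≤ Ch1)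
    (f g : Measure (EuclideanSpace ℝ (Fin d) × EuclideanSpace ℝ (Fin d)))
    [IsProbabilityMeasure f] [IsProbabilityMeasure g]
    (hfsupp : f ({p | ‖p.1‖ ≤ L ∧ ‖p.2‖ ≤ R}ᶜ) = 0)
    (hgsupp : g ({p | ‖p.1‖ ≤ L ∧ ‖p.2‖ ≤ R}ᶜ) = 0) :
    (∀ plan : Measure ((EuclideanSpace ℝ (Fin d) × EuclideanSpace ℝ (Fin d)) ×
        (EuclideanSpace ℝ (Fin d) × EuclideanSpace ℝ (Fin d))),
      IsProbabilityMeasure plan → plan.map Prod.fst = f → plan.map Prod.snd = g →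
      ∀ x v : EuclideanSpace ℝ (Fin d), ‖v‖ ≤ R →
        ‖accelField U h f x v - accelField U h g x v‖ ≤
          (CU2 + Real.sqrt (Ch ^ 2 + 4 * R ^ 2 * Ch1 ^ 2)) *
            ∫ q, phaseCost q ∂plan) ∧
    (∀ x v : EuclideanSpace ℝ (Fin d), ‖v‖ ≤ R →
      ‖accelField U h f x v - accelField U h g x v‖ ≤
        (CU2 + Real.sqrt (Ch ^ 2 + 4 * R ^ 2 * Ch1 ^ 2)) * W1coupling f g) := by
  have hK : 0 ≤ CU2 + √(Ch ^ 2 + 4 * R ^ 2 * Ch1 ^ 2) :=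
    add_nonneg ((norm_nonneg _).trans (hU2b 0)) (sqrt_nonneg _)
  have hh' : Differentiable ℝ h := hh.differentiable one_ne_zero
  exact ⟨fun _ _ h1 h2 _ _ hv =>
      norm_accelField_sub_le_of_coupling hU hh' hU2b hhb hh1b hfsupp hgsupp h1 h2 hv,
    fun _ _ hv => le_mul_W1coupling hK fun _ _ h1 h2 =>
      norm_accelField_sub_le_of_coupling hU hh' hU2b hhb hh1b hfsupp hgsupp h1 h2 hv⟩

/-- Let `U ∈ C²_b(ℝ^d)` and `h ∈ C¹_b(ℝ^d)`, with `CU2`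
bounding `‖∇²U‖`, `Ch` bounding `|h|` and `Ch1` bounding `‖∇h‖`. If `f, g` are
Borel probability measures supported in `{|x| ≤ L, |v| ≤ R}`, then for every
coupling `plan` of `f` and `g`,
`sup_{x, |v| ≤ R} |a_f(x,v) − a_g(x,v)|
   ≤ (CU2 + √(Ch² + 4R²Ch1²)) ∫ |(x′,v′) − (x″,v″)| dplan`,
and in particular the same bound holds with `W₁(f,g)` in place of the
transport cost of `plan`. -/
theorem stmt17 (d : ℕ) (L R : ℝ) (hL : 0 < L) (hR : 0 < R)
    (U h : EuclideanSpace ℝ (Fin d) → ℝ)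
    (hU : ContDiff ℝ 2 U) (hh : ContDiff ℝ 1 h)
    (CU CU1 CU2 Ch Ch1 : ℝ)
    (hUb : ∀ x, |U x| ≤ CU) (hU1b : ∀ x, ‖gradient U x‖ ≤ CU1)
    (hU2b : ∀ x, ‖fderiv ℝ (fun y => gradient U y) x‖ ≤ CU2)
    (hhb : ∀ x, |h x| ≤ Ch) (hh1b : ∀ x, ‖gradient h x‖ ≤ Ch1)
    (f g : Measure (EuclideanSpace ℝ (Fin d) × EuclideanSpace ℝ (Fin d)))
    [IsProbabilityMeasure f] [IsProbabilityMeasure g]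
    (hfsupp : f ({p | ‖p.1‖ ≤ L ∧ ‖p.2‖ ≤ R}ᶜ) = 0)
    (hgsupp : g ({p | ‖p.1‖ ≤ L ∧ ‖p.2‖ ≤ R}ᶜ) = 0) :
    (∀ plan : Measure ((EuclideanSpace ℝ (Fin d) × EuclideanSpace ℝ (Fin d)) ×
        (EuclideanSpace ℝ (Fin d) × EuclideanSpace ℝ (Fin d))),
      IsProbabilityMeasure plan → plan.map Prod.fst = f → plan.map Prod.snd = g →
      ∀ x v : EuclideanSpace ℝ (Fin d), ‖v‖ ≤ R →
        ‖accelField U h f x v - accelField U h g x v‖ ≤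
          (CU2 + Real.sqrt (Ch ^ 2 + 4 * R ^ 2 * Ch1 ^ 2)) *
            ∫ q, phaseCost q ∂plan) ∧
    (∀ x v : EuclideanSpace ℝ (Fin d), ‖v‖ ≤ R →
      ‖accelField U h f x v - accelField U h g x v‖ ≤
        (CU2 + Real.sqrt (Ch ^ 2 + 4 * R ^ 2 * Ch1 ^ 2)) * W1coupling f g) :=
  stmt17_general d L R U h hU hh CU2 Ch Ch1 hU2b hhb hh1b f g hfsupp hgsupp
end
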